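/- arXiv:1212.4966 — 8 statements merged into one kernel-verified Lean document; each statement's English description precedes it below -/
import Mathlib

section
/- Let U_1, ..., U_K be random variables (with arbitrary dependence) each uniformly distributed on [0,1]. Then for every ε ∈ [0,1], the probability that (2/K)(U_1 + ... + U_K) ≤ ε is at most ε. That is, twice the arithmetic mean of K p-values is a valid (possibly conservative) p-value. -/
open MeasureTheory Set

open intervalIntegral in
/-- For `p ∈ [0,1]`, the integral of `min u p` over `[0,1]` is `p - p²/2`. -/
lemma integral_min_Icc {p : ℝ} (hp0 : 0 ≤ p) (hp1 : p ≤ 1) :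
    ∫ u in Icc (0:ℝ) 1, min u p = p - p^2/2 := by
  rw [MeasureTheory.integral_Icc_eq_integral_Ioc,
    ← intervalIntegral.integral_of_le (zero_le_one)]
  have hcont : Continuous fun u : ℝ => min u p := continuous_id.min continuous_const
  have hi1 : IntervalIntegrable (fun u : ℝ => min u p) volume 0 p :=
    hcont.intervalIntegrable _ _
  have hi2 : IntervalIntegrable (fun u : ℝ => min u p) volume p 1 :=
    hcont.intervalIntegrable _ _
  rw [← intervalIntegral.integral_add_adjacent_intervals hi1 hi2]
  have h1 : (∫ u in (0:ℝ)..p, min u p) = ∫ u in (0:ℝ)..p, u := by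
    apply intervalIntegral.integral_congr
    intro u hu
    rw [uIcc_of_le hp0] at hu
    exact min_eq_left hu.2
  have h2 : (∫ u in p..(1:ℝ), min u p) = ∫ u in p..(1:ℝ), (p:ℝ) := by
    apply intervalIntegral.integral_congr
    intro u hu
    rw [uIcc_of_le hp1] at hu
    exact min_eq_right hu.1
  rw [h1, h2, integral_id, intervalIntegral.integral_const]
  simp only [smul_eq_mul]
  ring

/-- Twice the arithmetic mean of K p-values (uniform random variables with arbitrary
dependence) is a valid, possibly conservative, p-value (Rüschendorf). -/
theorem two_times_average_is_pvalue {Ω : Type*} [MeasurableSpace Ω]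
    (P : Measure Ω) [IsProbabilityMeasure P]
    {K : ℕ} (hK : 1 ≤ K) (U : Fin K → Ω → ℝ)
    (hmeas : ∀ k, Measurable (U k))
    (hunif : ∀ k, Measure.map (U k) P = volume.restrict (Icc (0:ℝ) 1))
    (ε : ℝ) (hε : ε ∈ Icc (0:ℝ) 1) :
    P {ω | (2 / (K:ℝ)) * ∑ k, U k ω ≤ ε} ≤ ENNReal.ofReal ε := by
  have hKpos : (0:ℝ) < K := by exact_mod_cast hK
  set A : Set Ω := {ω | (2 / (K:ℝ)) * ∑ k, U k ω ≤ ε} with hAdef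
  have hmsum : Measurable fun ω => ∑ k, U k ω := by
    exact Finset.measurable_sum _ fun k _ => hmeas k
  have hA : MeasurableSet A := by
    exact measurableSet_le (by measurability) measurable_const
  set p : ℝ := (P A).toReal with hpdef
  have hp0 : 0 ≤ p := ENNReal.toReal_nonneg
  have hp1 : p ≤ 1 := by
    rw [hpdef]
    exact ENNReal.toReal_le_of_le_ofReal zero_le_one (by simpa using prob_le_one)
  -- a.e. bounds on U k
  have hae : ∀ k, ∀ᵐ ω ∂P, U k ω ∈ Icc (0:ℝ) 1 := by
    intro k
    have h0 : P ((U k) ⁻¹' (Icc (0:ℝ) 1)ᶜ) = 0 := by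
      rw [← Measure.map_apply (hmeas k) measurableSet_Icc.compl, hunif k,
        Measure.restrict_apply measurableSet_Icc.compl]
      simp
    filter_upwards [measure_eq_zero_iff_ae_notMem.mp h0] with ω hω
    simpa using hω
  -- integrability of U k
  have hint : ∀ k, Integrable (U k) P := by
    intro k
    refine (integrable_const (1:ℝ)).mono' (hmeas k).aestronglyMeasurable ?_
    filter_upwards [hae k] with ω hω
    rw [Real.norm_eq_abs, abs_le]
    exact ⟨by linarith [hω.1], hω.2⟩
  -- expectation of min (U k) p
  have hmin : ∀ k, ∫ ω, min (U k ω) p ∂P = p - p^2/2 := by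
    intro k
    have hsm : AEStronglyMeasurable (fun u : ℝ => min u p) (Measure.map (U k) P) :=
      (continuous_id.min continuous_const).aestronglyMeasurable
    have h1 : ∫ ω, min (U k ω) p ∂P = ∫ u, min u p ∂(Measure.map (U k) P) :=
      (integral_map (hmeas k).aemeasurable hsm).symm
    rw [h1, hunif k]
    exact integral_min_Icc hp0 hp1
  -- integral of indicator of Aᶜ with value p
  have hintc : Integrable (Aᶜ.indicator fun _ => p) P :=
    (integrable_const p).indicator hA.compl
  have hcompl : ∫ ω, Aᶜ.indicator (fun _ => p) ω ∂P = (1 - p) * p := by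
    rw [MeasureTheory.integral_indicator hA.compl, setIntegral_const, measureReal_def,
      prob_compl_eq_one_sub hA, ENNReal.toReal_sub_of_le prob_le_one (by simp)]
    simp [hpdef, smul_eq_mul]
  -- key per-coordinate inequality
  have key : ∀ k, p^2/2 ≤ ∫ ω in A, U k ω ∂P := by
    intro k
    have hintmin : Integrable (fun ω => min (U k ω) p) P := by
      refine (integrable_const (max 1 |p|)).mono'
        ((hmeas k).min measurable_const).aestronglyMeasurable ?_
      filter_upwards [hae k] with ω hω
      rw [Real.norm_eq_abs]
      rcases min_cases (U k ω) p with ⟨h, _⟩ | ⟨h, _⟩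
      · rw [h]; refine le_trans ?_ (le_max_left _ _)
        rw [abs_le]; exact ⟨by linarith [hω.1], hω.2⟩
      · rw [h]; exact le_max_right _ _
    have hintf : Integrable (fun ω => min (U k ω) p - Aᶜ.indicator (fun _ => p) ω) P :=
      hintmin.sub hintc
    have hptw : ∀ ω, min (U k ω) p - Aᶜ.indicator (fun _ => p) ω
        ≤ A.indicator (U k) ω := by
      intro ω
      by_cases hω : ω ∈ A
      · simp only [indicator_of_mem hω, indicator_of_notMem (by simpa using hω : ω ∉ Aᶜ)]
        have := min_le_left (U k ω) p
        linarith
      · simp only [indicator_of_notMem hω, indicator_of_mem (by simpa using hω : ω ∈ Aᶜ)]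
        have := min_le_right (U k ω) p
        linarith
    have hmono := integral_mono hintf ((hint k).indicator hA) hptw
    rw [integral_sub hintmin hintc, hmin k, hcompl,
      MeasureTheory.integral_indicator hA] at hmono
    nlinarith [hmono]
  -- sum over k
  have hsum_int : ∫ ω in A, (∑ k, U k ω) ∂P = ∑ k, ∫ ω in A, U k ω ∂P := by
    exact integral_finset_sum _ fun k _ => (hint k).integrableOn
  have hlow : (K:ℝ) * (p^2/2) ≤ ∫ ω in A, (∑ k, U k ω) ∂P := by
    rw [hsum_int]
    calc (K:ℝ) * (p^2/2) = ∑ _k : Fin K, p^2/2 := by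
          rw [Finset.sum_const]; simp [mul_comm]
      _ ≤ ∑ k, ∫ ω in A, U k ω ∂P := Finset.sum_le_sum fun k _ => key k
  have hup : ∫ ω in A, (∑ k, U k ω) ∂P ≤ ((K:ℝ) * ε / 2) * p := by
    have h1 : ∫ ω in A, (∑ k, U k ω) ∂P ≤ ∫ _ω in A, ((K:ℝ) * ε / 2) ∂P := by
      refine setIntegral_mono_on ((integrable_finset_sum _ fun k _ => hint k).integrableOn)
        (integrableOn_const (measure_ne_top P A)) hA ?_
      intro ω hω
      have hω' : (2 / (K:ℝ)) * ∑ k, U k ω ≤ ε := hω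
      calc ∑ k, U k ω = ((K:ℝ)/2) * ((2/(K:ℝ)) * ∑ k, U k ω) := by
            field_simp
        _ ≤ ((K:ℝ)/2) * ε := by
            apply mul_le_mul_of_nonneg_left hω' (by positivity)
        _ = (K:ℝ) * ε / 2 := by ring
    rw [setIntegral_const] at h1
    calc ∫ ω in A, (∑ k, U k ω) ∂P ≤ (P A).toReal • ((K:ℝ) * ε / 2) := h1
      _ = ((K:ℝ) * ε / 2) * p := by rw [smul_eq_mul]; ring
  -- conclude
  have hpε : p ≤ ε := by
    have hkey : p^2 ≤ ε * p := by
      have := le_trans hlow hup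
      nlinarith
    rcases eq_or_lt_of_le hp0 with h | h
    · linarith [hε.1]
    · nlinarith
  have : P A = ENNReal.ofReal p := (ENNReal.ofReal_toReal (measure_ne_top P A)).symm
  rw [this]
  exact ENNReal.ofReal_le_ofReal hpε
end

section
/- Let U_1, ..., U_K be random variables on a common probability space, each uniformly distributed on [0,1], with arbitrary joint dependence, and let k ∈ {1, ..., K}. Denote by U_(k) the k-th smallest among U_1, ..., U_K. Then for every ε ∈ [0,1], Prob((K/k) · U_(k) ≤ ε) ≤ ε. (Rüger's combination rule yields a valid p-value.) -/
open MeasureTheory Set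
open scoped ENNReal

/-- The `k`-th smallest value among `v 0, ..., v (K-1)` (1-based `k`). -/
noncomputable def orderStat {K : ℕ} (v : Fin K → ℝ) (k : ℕ) : ℝ :=
  ((List.ofFn v).insertionSort (· ≤ ·)).getD (k - 1) 0

lemma card_le_of_orderStat_le {K k : ℕ} (hk : 1 ≤ k) (hkK : k ≤ K)
    (v : Fin K → ℝ) (t : ℝ) (h : orderStat v k ≤ t) :
    k ≤ (Finset.univ.filter fun i => v i ≤ t).card := by
  set l := (List.ofFn v).insertionSort (· ≤ ·) with hl
  have hlen : l.length = K := by simp [hl]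
  have hsort : l.Pairwise (· ≤ ·) := List.pairwise_insertionSort _ _
  have hklen : k ≤ l.length := by omega
  have htake : ∀ x ∈ l.take k, x ≤ t := by
    intro x hx
    rw [List.mem_take_iff_getElem] at hx
    obtain ⟨j, hj, rfl⟩ := hx
    have hj' : j < l.length := lt_of_lt_of_le (by omega : j < k) hklen
    have hk1 : k - 1 < l.length := by omega
    have hle : l[j] ≤ l[k-1] := by
      have := List.Pairwise.rel_get_of_le hsort
        (a := ⟨j, hj'⟩) (b := ⟨k-1, hk1⟩) (by simp; omega)
      simpa using this
    refine hle.trans ?_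
    have heq : l.getD (k-1) 0 = l[k-1] := List.getD_eq_getElem l 0 hk1
    rw [orderStat, ← hl, heq] at h
    exact h
  have hc1 : (l.take k).countP (fun x => decide (x ≤ t)) = k := by
    rw [List.countP_eq_length.mpr (by intro a ha; simpa using htake a ha)]
    simp [hklen]
  have hc2 : k ≤ l.countP (fun x => decide (x ≤ t)) := by
    conv_rhs => rw [← List.take_append_drop k l]
    rw [List.countP_append, hc1]
    omega
  have hperm : l.countP (fun x => decide (x ≤ t)) = (List.ofFn v).countP (fun x => decide (x ≤ t)) :=
    (List.perm_insertionSort _ _).countP_eq _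
  have hcard : (List.ofFn v).countP (fun x => decide (x ≤ t))
      = (Finset.univ.filter fun i => v i ≤ t).card := by
    rw [List.ofFn_eq_map, List.countP_map, Fin.univ_def]
    simp [Finset.card, Finset.filter, List.countP_eq_length_filter]
    rfl
  omega

/-- Rüger's combination rule: (K/k) times the k-th smallest of K arbitrarily dependent
uniform random variables is a valid p-value. -/
theorem ruger_is_pvalue {Ω : Type*} [MeasurableSpace Ω]
    (P : Measure Ω) [IsProbabilityMeasure P]
    {K k : ℕ} (hk : 1 ≤ k) (hkK : k ≤ K) (U : Fin K → Ω → ℝ)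
    (hmeas : ∀ i, Measurable (U i))
    (hunif : ∀ i, Measure.map (U i) P = volume.restrict (Icc (0:ℝ) 1))
    (ε : ℝ) (hε : ε ∈ Icc (0:ℝ) 1) :
    P {ω | ((K:ℝ) / (k:ℝ)) * orderStat (fun i => U i ω) k ≤ ε} ≤ ENNReal.ofReal ε := by
  obtain ⟨hε0, hε1⟩ := hε
  have hK : 1 ≤ K := le_trans hk hkK
  have hk0 : (0:ℝ) < k := by exact_mod_cast hk
  have hK0 : (0:ℝ) < K := by exact_mod_cast hK
  set t : ℝ := (k:ℝ) * ε / K with ht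
  have ht0 : 0 ≤ t := by positivity
  have ht1 : t ≤ 1 := by
    rw [ht, div_le_one hK0]
    calc (k:ℝ) * ε ≤ (k:ℝ) * 1 := by nlinarith
      _ ≤ K := by simpa using (by exact_mod_cast hkK : (k:ℝ) ≤ K)
  -- the "at least k small" event
  set A : Set Ω := {ω | k ≤ (Finset.univ.filter fun i => U i ω ≤ t).card} with hA
  have hsub : {ω | ((K:ℝ) / (k:ℝ)) * orderStat (fun i => U i ω) k ≤ ε} ⊆ A := by
    intro ω hω
    simp only [mem_setOf_eq] at hω
    have hdiv : (0:ℝ) < (K:ℝ) / k := by positivity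
    have hord : orderStat (fun i => U i ω) k ≤ t := by
      rw [ht]
      rw [mul_comm] at hω
      rw [← le_div_iff₀ hdiv] at hω
      calc orderStat (fun i => U i ω) k ≤ ε / ((K:ℝ)/k) := hω
        _ = (k:ℝ) * ε / K := by field_simp
    exact card_le_of_orderStat_le hk hkK _ t hord
  refine le_trans (measure_mono hsub) ?_
  -- measurable "small" sets
  set S : Fin K → Set Ω := fun i => {ω | U i ω ≤ t} with hS
  have hSm : ∀ i, MeasurableSet (S i) := fun i => (hmeas i) measurableSet_Iic
  set f : Ω → ℝ≥0∞ := fun ω => ∑ i, (S i).indicator 1 ω with hf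
  have hfm : Measurable f := by
    apply Finset.measurable_sum
    intro i _
    exact (measurable_indicator_const_iff 1).mpr (hSm i)
  have hAf : ∀ ω ∈ A, (k:ℝ≥0∞) ≤ f ω := by
    intro ω hω
    have : f ω = ((Finset.univ.filter fun i => U i ω ≤ t).card : ℝ≥0∞) := by
      rw [hf]
      simp only [Set.indicator_apply, hS, mem_setOf_eq, Pi.one_apply]
      rw [Finset.card_filter]
      push_cast
      simp
    rw [this]
    exact_mod_cast hω
  have hAm : MeasurableSet A := by
    have : A = f ⁻¹' (Ici (k:ℝ≥0∞)) := by
      ext ω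
      simp only [hA, mem_setOf_eq, mem_preimage, mem_Ici]
      constructor
      · intro h; exact hAf ω h
      · intro h
        have hfc : f ω = ((Finset.univ.filter fun i => U i ω ≤ t).card : ℝ≥0∞) := by
          rw [hf]
          simp only [Set.indicator_apply, hS, mem_setOf_eq, Pi.one_apply]
          rw [Finset.card_filter]
          push_cast
          simp
        rw [hfc] at h
        exact_mod_cast h
    rw [this]
    exact hfm measurableSet_Ici
  have key : (k:ℝ≥0∞) * P A ≤ (K:ℝ≥0∞) * ENNReal.ofReal t := by
    calc (k:ℝ≥0∞) * P A = ∫⁻ _ω in A, (k:ℝ≥0∞) ∂P := by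
          rw [setLIntegral_const]
      _ ≤ ∫⁻ ω in A, f ω ∂P := setLIntegral_mono hfm hAf
      _ ≤ ∫⁻ ω, f ω ∂P := setLIntegral_le_lintegral _ _
      _ = ∑ i, P (S i) := by
          rw [hf, lintegral_finset_sum]
          · congr 1; ext i
            exact lintegral_indicator_one (hSm i)
          · intro i _
            exact (measurable_indicator_const_iff 1).mpr (hSm i)
      _ = ∑ _i : Fin K, ENNReal.ofReal t := by
          congr 1; ext i
          have : S i = (U i) ⁻¹' (Iic t) := rfl
          rw [this, ← Measure.map_apply (hmeas i) measurableSet_Iic, hunif i,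
            Measure.restrict_apply measurableSet_Iic]
          have : Iic t ∩ Icc (0:ℝ) 1 = Icc 0 t := by
            ext x
            simp only [mem_inter_iff, mem_Iic, mem_Icc]
            constructor
            · rintro ⟨h1, h2, h3⟩; exact ⟨h2, h1⟩
            · rintro ⟨h1, h2⟩; exact ⟨h2, h1, h2.trans ht1⟩
          rw [this, Real.volume_Icc, sub_zero]
      _ = (K:ℝ≥0∞) * ENNReal.ofReal t := by simp [mul_comm]
  have hrhs : (K:ℝ≥0∞) * ENNReal.ofReal t = (k:ℝ≥0∞) * ENNReal.ofReal ε := by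
    rw [← ENNReal.ofReal_natCast K, ← ENNReal.ofReal_natCast k,
      ← ENNReal.ofReal_mul (by positivity), ← ENNReal.ofReal_mul (by positivity)]
    congr 1
    rw [ht]
    field_simp
  rw [hrhs] at key
  have hk0' : (k:ℝ≥0∞) ≠ 0 := Nat.cast_ne_zero.mpr (by omega)
  exact (ENNReal.mul_le_mul_iff_right hk0' (by simp)).mp key
end

section
/- For any s ∈ [0, ∞) and any probability measure x on [0,1]^K all of whose one-dimensional marginals are the uniform distribution on [0,1], the x-measure of the set E_s = {(u_1,...,u_K) ∈ [0,1]^K : u_1 + ... + u_K ≤ s} is at most min(2s/K, 1). -/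
open MeasureTheory Set

/-- Rüschendorf's bound: for any copular probability measure `x` on `[0,1]^K`
(all one-dimensional marginals uniform on `[0,1]`), the measure of
`{u : u 0 + ... + u (K-1) ≤ s}` is at most `min (2s/K) 1`. -/
theorem ruschendorf_upper_bound {K : ℕ} (hK : 1 ≤ K)
    (x : Measure (Fin K → ℝ)) [IsProbabilityMeasure x]
    (hx : ∀ k, Measure.map (fun u => u k) x = volume.restrict (Icc (0:ℝ) 1))
    (s : ℝ) (hs : 0 ≤ s) :
    x {u | ∑ k, u k ≤ s} ≤ ENNReal.ofReal (min (2 * s / (K:ℝ)) 1) := by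
  have hKpos : (0:ℝ) < (K:ℝ) := by exact_mod_cast hK
  set E : Set (Fin K → ℝ) := {u | ∑ k, u k ≤ s} with hEdef
  have hmsum : Measurable fun u : Fin K → ℝ => ∑ k, u k :=
    Finset.measurable_sum _ (fun k _ => measurable_pi_apply k)
  have hmE : MeasurableSet E := measurableSet_le hmsum measurable_const
  set p : ℝ := (x E).toReal with hpdef
  have hp0 : 0 ≤ p := ENNReal.toReal_nonneg
  have hxE1 : x E ≤ 1 := prob_le_one
  have hp1 : p ≤ 1 := by
    rw [hpdef]
    exact ENNReal.toReal_le_of_le_ofReal one_pos.le (by simpa using hxE1)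
  have hxEp : x E = ENNReal.ofReal p := (ENNReal.ofReal_toReal (measure_ne_top x E)).symm
  have hmk : ∀ k : Fin K, Measurable fun u : Fin K → ℝ => u k := fun k => measurable_pi_apply k
  -- integrability of coordinates
  have hint : ∀ k, Integrable (fun u : Fin K → ℝ => u k) x := by
    intro k
    have h1 : Integrable id (Measure.map (fun u : Fin K → ℝ => u k) x) := by
      rw [hx k]
      exact continuous_id.integrableOn_Icc
    exact (integrable_map_measure aestronglyMeasurable_id (hmk k).aemeasurable).mp h1
  -- the auxiliary function
  have hgc : Continuous fun t : ℝ => max (p - t) 0 :=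
    (continuous_const.sub continuous_id).max continuous_const
  have hintmax : ∀ k, Integrable (fun u : Fin K → ℝ => max (p - u k) 0) x := by
    intro k
    have h1 : Integrable (fun t : ℝ => max (p - t) 0)
        (Measure.map (fun u : Fin K → ℝ => u k) x) := by
      rw [hx k]
      exact hgc.integrableOn_Icc
    exact (integrable_map_measure (hgc.aestronglyMeasurable) (hmk k).aemeasurable).mp h1
  -- value of ∫ max (p - u k) 0
  have hvalmax : ∀ k, ∫ u, max (p - u k) 0 ∂x = p ^ 2 / 2 := by
    intro k
    have h1 : ∫ u, max (p - u k) 0 ∂x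
        = ∫ t, max (p - t) 0 ∂(Measure.map (fun u : Fin K → ℝ => u k) x) :=
      (integral_map (hmk k).aemeasurable hgc.aestronglyMeasurable).symm
    rw [h1, hx k]
    have h2 : ∫ t in Icc (0:ℝ) 1, max (p - t) 0 = ∫ t in (0:ℝ)..1, max (p - t) 0 := by
      rw [intervalIntegral.integral_of_le zero_le_one, integral_Icc_eq_integral_Ioc]
    rw [h2]
    have hii : ∀ a b : ℝ, IntervalIntegrable (fun t : ℝ => max (p - t) 0) volume a b :=
      fun a b => hgc.intervalIntegrable a b
    rw [← intervalIntegral.integral_add_adjacent_intervals (hii 0 p) (hii p 1)]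
    have h3 : ∫ t in (0:ℝ)..p, max (p - t) 0 = ∫ t in (0:ℝ)..p, (p - t) := by
      apply intervalIntegral.integral_congr
      intro t ht
      rw [uIcc_of_le hp0] at ht
      exact max_eq_left (by linarith [ht.2])
    have h4 : ∫ t in p..(1:ℝ), max (p - t) 0 = ∫ t in p..(1:ℝ), (0:ℝ) := by
      apply intervalIntegral.integral_congr
      intro t ht
      rw [uIcc_of_le hp1] at ht
      exact max_eq_right (by linarith [ht.1])
    rw [h3, h4]
    rw [intervalIntegral.integral_sub intervalIntegrable_const intervalIntegral.intervalIntegrable_id]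
    simp [integral_id]
    ring
  -- per-coordinate lower bound
  have hkey : ∀ k : Fin K, p * p - p ^ 2 / 2 ≤ ∫ u in E, u k ∂x := by
    intro k
    have hle : ∀ u : Fin K → ℝ,
        p * E.indicator (fun _ => (1:ℝ)) u - max (p - u k) 0
          ≤ E.indicator (fun u => u k) u := by
      intro u
      by_cases hu : u ∈ E
      · simp only [indicator_of_mem hu]
        rcases le_total (u k) p with h | h
        · rw [max_eq_left (by linarith)]; ring_nf; linarith
        · rw [max_eq_right (by linarith)]; linarith
      · simp only [indicator_of_notMem hu]
        have : 0 ≤ max (p - u k) 0 := le_max_right _ _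
        linarith
    have hintL : Integrable
        (fun u => p * E.indicator (fun _ => (1:ℝ)) u - max (p - u k) 0) x := by
      exact (((integrable_const (1:ℝ)).indicator hmE).const_mul p).sub (hintmax k)
    have hintR : Integrable (E.indicator fun u : Fin K → ℝ => u k) x :=
      (hint k).indicator hmE
    have hmono := integral_mono hintL hintR hle
    rw [integral_sub (((integrable_const (1:ℝ)).indicator hmE).const_mul p) (hintmax k),
      integral_const_mul, integral_indicator_const _ hmE, hvalmax k,
      integral_indicator hmE] at hmono
    simp only [smul_eq_mul, mul_one, measureReal_def] at hmono
    linarith [hmono]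
  -- sum over coordinates
  have hsum : (K:ℝ) * (p * p - p ^ 2 / 2) ≤ ∫ u in E, (∑ k, u k) ∂x := by
    rw [integral_finset_sum _ (fun k _ => ((hint k).restrict (s := E)))]
    calc (K:ℝ) * (p * p - p ^ 2 / 2)
        = ∑ _k : Fin K, (p * p - p ^ 2 / 2) := by
          rw [Finset.sum_const, Finset.card_univ, Fintype.card_fin]; ring
      _ ≤ ∑ k : Fin K, ∫ u in E, u k ∂x := Finset.sum_le_sum fun k _ => hkey k
  -- upper bound for the integral
  have hup : ∫ u in E, (∑ k, u k) ∂x ≤ s * p := by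
    have h1 : ∫ u in E, (∑ k, u k) ∂x ≤ ∫ _u in E, s ∂x := by
      apply setIntegral_mono_on
      · exact (integrable_finset_sum _ fun k _ => hint k).restrict
      · exact integrableOn_const (measure_lt_top _ _).ne
      · exact hmE
      · intro u hu; exact hu
    rw [setIntegral_const] at h1
    simpa [mul_comm, measureReal_def] using h1
  -- conclude p ≤ 2s/K
  have hps : p ≤ 2 * s / (K:ℝ) := by
    have hchain : (K:ℝ) * (p ^ 2 / 2) ≤ s * p := by nlinarith [le_trans hsum hup]
    rcases eq_or_lt_of_le hp0 with h | h
    · rw [← h]; positivity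
    · rw [le_div_iff₀ hKpos]; nlinarith
  have hminsplit : ENNReal.ofReal (min (2 * s / (K:ℝ)) 1)
      = min (ENNReal.ofReal (2 * s / (K:ℝ))) (ENNReal.ofReal 1) := by
    rcases le_total (2 * s / (K:ℝ)) 1 with h | h
    · rw [min_eq_left h, min_eq_left (ENNReal.ofReal_le_ofReal h)]
    · rw [min_eq_right h, min_eq_right (ENNReal.ofReal_le_ofReal h)]
  rw [hminsplit]
  refine le_min ?_ ?_
  · rw [hxEp]
    exact ENNReal.ofReal_le_ofReal hps
  · simpa using hxE1
end

section
/- Let P be a random variable with Prob(P ≤ ε) ≤ ε for all ε ∈ [0,1], and let θ be uniform on [0,1] independent of P. Define U(ω) := Prob(P < P(ω)) + θ(ω)·Prob(P = P(ω)). Then U is uniformly distributed on [0,1] and U ≤ P almost surely. -/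
open MeasureTheory Set

open scoped ENNReal

lemma exists_cofinal_seq (S : Set ℝ) (hS : S.Nonempty) :
    ∃ f : ℕ → ℝ, (∀ n, f n ∈ S) ∧ ∀ s ∈ S, ∃ n, s ≤ f n := by
  by_cases hb : BddAbove S
  · by_cases hm : sSup S ∈ S
    · exact ⟨fun _ => sSup S, fun _ => hm, fun s hs => ⟨0, le_csSup hb hs⟩⟩
    · have h1 : ∀ n : ℕ, ∃ y ∈ S, sSup S - 1/(n+1) < y := by
        intro n
        apply exists_lt_of_lt_csSup hS
        have : (0:ℝ) < 1/(n+1) := by positivity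
        linarith
      choose f hfS hflt using h1
      refine ⟨f, hfS, fun s hs => ?_⟩
      have hlt : s < sSup S := lt_of_le_of_ne (le_csSup hb hs) (fun h => hm (h ▸ hs))
      obtain ⟨n, hn⟩ := exists_nat_one_div_lt (sub_pos.2 hlt)
      exact ⟨n, le_of_lt (lt_of_le_of_lt (by linarith [hn]) (hflt n))⟩
  · rw [not_bddAbove_iff] at hb
    choose f hfS hflt using fun n : ℕ => hb n
    refine ⟨f, hfS, fun s hs => ?_⟩
    obtain ⟨n, hn⟩ := exists_nat_gt s
    exact ⟨n, le_of_lt (hn.trans (hflt n))⟩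

lemma exists_coinitial_seq (S : Set ℝ) (hS : S.Nonempty) :
    ∃ f : ℕ → ℝ, (∀ n, f n ∈ S) ∧ ∀ s ∈ S, ∃ n, f n ≤ s := by
  obtain ⟨f, hfS, hf⟩ := exists_cofinal_seq ((fun x : ℝ => -x) '' S)
    (hS.image _)
  refine ⟨fun n => -(f n), fun n => ?_, fun s hs => ?_⟩
  · obtain ⟨x, hx, hfx⟩ := hfS n
    show -f n ∈ S
    rw [← hfx]; simpa using hx
  · obtain ⟨n, hn⟩ := hf (-s) ⟨s, hs, rfl⟩
    exact ⟨n, show -f n ≤ s by linarith⟩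

lemma level_null (μ : Measure ℝ) [IsFiniteMeasure μ] (c : ℝ≥0∞) :
    μ {x | μ (Iio x) = c ∧ μ (Iic x) = c} = 0 := by
  set T := {x | μ (Iio x) = c ∧ μ (Iic x) = c} with hT
  rcases T.eq_empty_or_nonempty with h | h
  · simp [h]
  have hsing : ∀ x ∈ T, μ {x} = 0 := by
    intro x hx
    have hsplit : μ (Iic x) = μ (Iio x) + μ {x} := by
      rw [← Iio_union_right, measure_union (by simp) (measurableSet_singleton x)]
    have hc : c ≠ ∞ := by
      rintro rfl
      exact (measure_ne_top μ (Iic x)) hx.2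
    have h2 : μ (Iio x) + μ {x} = μ (Iio x) + 0 := by
      rw [add_zero, ← hsplit, hx.2, ← hx.1]
    exact (ENNReal.add_right_inj (measure_ne_top μ _)).1 h2
  obtain ⟨f, hfT, hf⟩ := exists_cofinal_seq T h
  obtain ⟨g, hgT, hg⟩ := exists_coinitial_seq T h
  have hIoo : ∀ n m, μ (Ioo (g m) (f n)) = 0 := by
    intro n m
    rcases le_or_gt (f n) (g m) with hle | hlt
    · rw [Ioo_eq_empty (by exact fun h' => absurd hle (not_le.2 h'))]; simp
    · have hc : c ≠ ∞ := fun h => (measure_ne_top μ (Iic (g m))) (h ▸ (hgT m).2)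
      have hsub : Iic (g m) ∪ Ioo (g m) (f n) ⊆ Iio (f n) := by
        rintro x (hx | hx)
        · exact lt_of_le_of_lt hx hlt
        · exact hx.2
      have hdisj : Disjoint (Iic (g m)) (Ioo (g m) (f n)) := by
        rw [Set.disjoint_left]
        exact fun x hx hx' => absurd hx'.1 (not_lt.2 hx)
      have hle2 : μ (Iic (g m)) + μ (Ioo (g m) (f n)) ≤ c := by
        rw [← measure_union hdisj measurableSet_Ioo]
        exact le_trans (measure_mono hsub) (le_of_eq (hfT n).1)
      rw [(hgT m).2] at hle2
      have h3 : c + μ (Ioo (g m) (f n)) ≤ c + 0 := by simpa using hle2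
      simpa using (ENNReal.add_le_add_iff_left hc).1 h3
  have hcover : T ⊆ (⋃ n, {f n}) ∪ (⋃ m, {g m}) ∪ ⋃ n, ⋃ m, Ioo (g m) (f n) := by
    intro t ht
    obtain ⟨n, hn⟩ := hf t ht
    obtain ⟨m, hm⟩ := hg t ht
    rcases eq_or_lt_of_le hn with rfl | hn'
    · exact Or.inl (Or.inl (mem_iUnion.2 ⟨n, rfl⟩))
    rcases eq_or_lt_of_le hm with rfl | hm'
    · exact Or.inl (Or.inr (mem_iUnion.2 ⟨m, rfl⟩))
    · exact Or.inr (mem_iUnion.2 ⟨n, mem_iUnion.2 ⟨m, hm', hn'⟩⟩)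
  have hA : μ (⋃ n, ({f n} : Set ℝ)) = 0 := measure_iUnion_null fun n => hsing _ (hfT n)
  have hB : μ (⋃ m, ({g m} : Set ℝ)) = 0 := measure_iUnion_null fun m => hsing _ (hgT m)
  have h2 : μ (⋃ n, ⋃ m, Ioo (g m) (f n)) = 0 :=
    measure_iUnion_null fun n => measure_iUnion_null fun m => hIoo n m
  have h0 : μ (((⋃ n, {f n}) ∪ ⋃ m, {g m}) ∪ ⋃ n, ⋃ m, Ioo (g m) (f n)) = 0 :=
    measure_union_null (measure_union_null hA hB) h2
  exact le_antisymm (le_trans (measure_mono hcover) (le_of_eq h0)) zero_le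

/-- Randomized probability integral transform: if `X` is a p-value function and `θ` is
uniform on `[0,1]` independent of `X`, then
`U(ω) = Prob(X < X(ω)) + θ(ω)·Prob(X = X(ω))` is uniform on `[0,1]` and `U ≤ X` a.s. -/
theorem randomized_pit {Ω : Type*} [MeasurableSpace Ω]
    (P : Measure Ω) [IsProbabilityMeasure P]
    (X θ : Ω → ℝ) (hX : Measurable X) (hθ : Measurable θ)
    (hpv : ∀ ε ∈ Icc (0:ℝ) 1, P {ω | X ω ≤ ε} ≤ ENNReal.ofReal ε)
    (hθu : Measure.map θ P = volume.restrict (Icc (0:ℝ) 1))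
    (hind : ProbabilityTheory.IndepFun X θ P) :
    Measure.map
        (fun ω => (P {ω' | X ω' < X ω}).toReal + θ ω * (P {ω' | X ω' = X ω}).toReal) P
      = volume.restrict (Icc (0:ℝ) 1) ∧
    ∀ᵐ ω ∂P,
      (P {ω' | X ω' < X ω}).toReal + θ ω * (P {ω' | X ω' = X ω}).toReal ≤ X ω := by
  classical
  set μ := Measure.map X P with hμdef
  haveI hμprob : IsProbabilityMeasure μ := Measure.isProbabilityMeasure_map hX.aemeasurable
  have hlt : ∀ x : ℝ, P {ω' | X ω' < x} = μ (Iio x) := fun x =>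
    (Measure.map_apply hX measurableSet_Iio).symm
  have heqx : ∀ x : ℝ, P {ω' | X ω' = x} = μ {x} := fun x =>
    (Measure.map_apply hX (measurableSet_singleton x)).symm
  set g : ℝ → ℝ := fun x => (μ (Iio x)).toReal with hgdef
  set F : ℝ → ℝ := fun x => (μ (Iic x)).toReal with hFdef
  set d : ℝ → ℝ := fun x => (μ {x}).toReal with hddef
  have hgF : ∀ x, g x + d x = F x := by
    intro x
    rw [hgdef, hddef, hFdef]
    simp only
    rw [← ENNReal.toReal_add (measure_ne_top _ _) (measure_ne_top _ _),
      ← measure_union (by simp) (measurableSet_singleton x), Iio_union_right]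
  have hgnn : ∀ x, 0 ≤ g x := fun x => ENNReal.toReal_nonneg
  have hdnn : ∀ x, 0 ≤ d x := fun x => ENNReal.toReal_nonneg
  have hgmono : Monotone g := fun x y h =>
    ENNReal.toReal_mono (measure_ne_top _ _) (measure_mono (Iio_subset_Iio h))
  have hFmono : Monotone F := fun x y h =>
    ENNReal.toReal_mono (measure_ne_top _ _) (measure_mono (Iic_subset_Iic.2 h))
  have hgm : Measurable g := hgmono.measurable
  have hFm : Measurable F := hFmono.measurable
  have hdm : Measurable d := by
    have h : d = fun x => F x - g x := by funext x; rw [← hgF x]; ring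
    rw [h]; exact hFm.sub hgm
  have hFle1 : ∀ x, F x ≤ 1 := by
    intro x
    rw [hFdef]
    simp only
    exact ENNReal.toReal_le_of_le_ofReal zero_le_one (by simpa using prob_le_one)
  set U : Ω → ℝ := fun ω => g (X ω) + θ ω * d (X ω) with hUdef
  have hUm : Measurable U := (hgm.comp hX).add (hθ.mul (hdm.comp hX))
  have hfun : (fun ω => (P {ω' | X ω' < X ω}).toReal + θ ω * (P {ω' | X ω' = X ω}).toReal)
      = U := by
    funext ω
    rw [hUdef]
    simp only [hgdef, hddef, hlt (X ω), heqx (X ω)]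
  have hres : ∀ c : ℝ, (volume.restrict (Icc (0:ℝ) 1)) (Iic c) = ENNReal.ofReal (min c 1) := by
    intro c
    rw [Measure.restrict_apply measurableSet_Iic]
    have h : Iic c ∩ Icc (0:ℝ) 1 = Icc 0 (min c 1) := by
      ext x
      simp only [mem_inter_iff, mem_Iic, mem_Icc, le_min_iff]
      constructor
      · rintro ⟨h1, h2, h3⟩; exact ⟨h2, h1, h3⟩
      · rintro ⟨h1, h2, h3⟩; exact ⟨h2, h1, h3⟩
    rw [h, Real.volume_Icc, sub_zero]
  have hθIic : ∀ c : ℝ, P (θ ⁻¹' Iic c) = ENNReal.ofReal (min c 1) := by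
    intro c
    rw [← Measure.map_apply hθ measurableSet_Iic, hθu, hres]
  have hθmem : ∀ᵐ ω ∂P, θ ω ∈ Icc (0:ℝ) 1 := by
    have h0 : P (θ ⁻¹' (Icc (0:ℝ) 1)ᶜ) = 0 := by
      rw [← Measure.map_apply hθ measurableSet_Icc.compl, hθu,
        Measure.restrict_apply measurableSet_Icc.compl]
      simp
    rw [ae_iff]
    exact h0
  have hθne0 : ∀ᵐ ω ∂P, θ ω ≠ 0 := by
    have h0 : P (θ ⁻¹' {(0:ℝ)}) = 0 := by
      rw [← Measure.map_apply hθ (measurableSet_singleton 0), hθu,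
        Measure.restrict_apply (measurableSet_singleton 0)]
      exact measure_mono_null inter_subset_left Real.volume_singleton
    rw [ae_iff]
    simp only [not_not]
    exact h0
  have hθIic0 : P (θ ⁻¹' Iic 0) = 0 := by rw [hθIic 0]; simp
  -- the CDF of U
  have key : ∀ u : ℝ, P {ω | U ω ≤ u} = ENNReal.ofReal (min u 1) := by
    intro u
    rcases lt_or_ge u 0 with hu0 | hu0
    · rw [min_eq_left (by linarith), ENNReal.ofReal_eq_zero.2 hu0.le]
      refine measure_mono_null (fun ω hω => ?_) hθIic0
      simp only [mem_setOf_eq] at hω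
      simp only [mem_preimage, mem_Iic]
      by_contra hθω
      push_neg at hθω
      have h1 : 0 ≤ U ω :=
        add_nonneg (hgnn _) (mul_nonneg hθω.le (hdnn _))
      linarith
    rcases le_or_gt 1 u with hu1 | hu1
    · rw [min_eq_right hu1, ENNReal.ofReal_one]
      have hms : MeasurableSet {ω | U ω ≤ u} := hUm measurableSet_Iic
      have hae : ∀ᵐ ω ∂P, U ω ≤ u := by
        filter_upwards [hθmem] with ω hθω
        have h1 : θ ω * d (X ω) ≤ d (X ω) := by nlinarith [hθω.1, hθω.2, hdnn (X ω)]
        have h2 := hgF (X ω)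
        have h3 := hFle1 (X ω)
        rw [hUdef]
        simp only
        linarith
      have h0 : P {ω | U ω ≤ u}ᶜ = 0 := by
        rw [ae_iff] at hae
        exact hae
      exact (prob_compl_eq_zero_iff hms).1 h0
    rcases eq_or_lt_of_le hu0 with hu0' | hupos
    · -- u = 0
      rw [min_eq_left (by linarith), ← hu0', ENNReal.ofReal_zero]
      have hT : P (X ⁻¹' {x | μ (Iio x) = 0 ∧ μ (Iic x) = 0}) = 0 :=
        le_antisymm (le_trans (Measure.le_map_apply hX.aemeasurable _)
          (le_of_eq (level_null μ 0))) zero_le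
      refine measure_mono_null (fun ω hω => ?_) (measure_union_null hθIic0 hT)
      simp only [mem_setOf_eq, ← hu0'] at hω
      by_cases hθω : θ ω ≤ 0
      · exact Or.inl hθω
      push_neg at hθω
      right
      have hω' : g (X ω) + θ ω * d (X ω) ≤ 0 := hω
      have hθd : 0 ≤ θ ω * d (X ω) := mul_nonneg hθω.le (hdnn _)
      have hg0 : g (X ω) = 0 := by linarith [hgnn (X ω)]
      have hd0 : d (X ω) = 0 := by nlinarith [hgnn (X ω), hdnn (X ω), hω']
      have hio : μ (Iio (X ω)) = 0 := by
        rcases (ENNReal.toReal_eq_zero_iff _).1 hg0 with h' | h'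
        · exact h'
        · exact absurd h' (measure_ne_top _ _)
      have hsx : μ {X ω} = 0 := by
        rcases (ENNReal.toReal_eq_zero_iff _).1 hd0 with h' | h'
        · exact h'
        · exact absurd h' (measure_ne_top _ _)
      have hic : μ (Iic (X ω)) = 0 := by
        rw [← Iio_union_right]
        exact measure_union_null hio hsx
      exact ⟨hio, hic⟩
    · -- 0 < u < 1, the main case
      rw [min_eq_left hu1.le]
      set S : Set ℝ := {x | ENNReal.ofReal u ≤ μ (Iic x)} with hSdef
      have hone_div : ∀ {n m : ℕ}, n ≤ m → 1/((m:ℝ)+1) ≤ 1/((n:ℝ)+1) := by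
        intro n m h
        apply one_div_le_one_div_of_le (by positivity)
        have : (n:ℝ) ≤ m := by exact_mod_cast h
        linarith
      have hne : S.Nonempty := by
        have hmono : Monotone (fun n : ℕ => Iic ((n:ℝ))) := fun n m h =>
          Iic_subset_Iic.2 (by exact_mod_cast h)
        have htend := tendsto_measure_iUnion_atTop (μ := μ) hmono
        have huniv : (⋃ n : ℕ, Iic ((n:ℝ))) = univ := by
          ext x
          simp only [mem_iUnion, mem_Iic, mem_univ, iff_true]
          exact exists_nat_ge x
        rw [huniv, measure_univ] at htend
        have hlt1 : ENNReal.ofReal u < 1 := ENNReal.ofReal_lt_one.2 hu1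
        obtain ⟨n, hn⟩ := (htend.eventually_const_lt hlt1).exists
        exact ⟨n, hn.le⟩
      have hbdd : BddBelow S := by
        have hanti : Antitone (fun n : ℕ => Iic (-(n:ℝ))) := by
          intro n m h
          refine Iic_subset_Iic.2 ?_
          have h' : (n:ℝ) ≤ m := by exact_mod_cast h
          linarith
        have htend := tendsto_measure_iInter_atTop (μ := μ)
          (fun n => measurableSet_Iic.nullMeasurableSet) hanti ⟨0, measure_ne_top _ _⟩
        have hempty : (⋂ n : ℕ, Iic (-(n:ℝ))) = ∅ := by
          ext x
          simp only [mem_iInter, mem_Iic, mem_empty_iff_false, iff_false, not_forall]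
          obtain ⟨n, hn⟩ := exists_nat_gt (-x)
          exact ⟨n, by push_neg; linarith⟩
        rw [hempty, measure_empty] at htend
        have hpos : (0:ℝ≥0∞) < ENNReal.ofReal u := ENNReal.ofReal_pos.2 hupos
        obtain ⟨n, hn⟩ := (htend.eventually_lt_const hpos).exists
        refine ⟨-(n:ℝ), fun s hs => ?_⟩
        by_contra hcon
        push_neg at hcon
        exact absurd (le_trans hs (measure_mono (Iic_subset_Iic.2 hcon.le)))
          (not_le.2 hn)
      set x₀ := sInf S with hx0
      have hSup : ∀ x, x < x₀ → μ (Iic x) < ENNReal.ofReal u := by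
        intro x hx
        by_contra hcon
        push_neg at hcon
        exact absurd (csInf_le hbdd hcon) (not_le.2 hx)
      have hF0 : ENNReal.ofReal u ≤ μ (Iic x₀) := by
        have hseq : ∀ n : ℕ, ENNReal.ofReal u ≤ μ (Iic (x₀ + 1/((n:ℝ)+1))) := by
          intro n
          have h1 : x₀ < x₀ + 1/((n:ℝ)+1) := by
            have : (0:ℝ) < 1/((n:ℝ)+1) := by positivity
            linarith
          obtain ⟨s, hsS, hs⟩ := (csInf_lt_iff hbdd hne).1 h1
          exact le_trans hsS (measure_mono (Iic_subset_Iic.2 hs.le))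
        have hseteq : (⋂ n : ℕ, Iic (x₀ + 1/((n:ℝ)+1))) = Iic x₀ := by
          ext x
          simp only [mem_iInter, mem_Iic]
          constructor
          · intro hx
            by_contra hcon
            push_neg at hcon
            obtain ⟨n, hn⟩ := exists_nat_one_div_lt (sub_pos.2 hcon)
            have := hx n
            linarith
          · intro hx n
            have : (0:ℝ) < 1/((n:ℝ)+1) := by positivity
            linarith
        have hanti : Antitone (fun n : ℕ => Iic (x₀ + 1/((n:ℝ)+1))) := fun n m h =>
          Iic_subset_Iic.2 (by linarith [hone_div h])
        have htend := tendsto_measure_iInter_atTop (μ := μ)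
          (fun n => measurableSet_Iic.nullMeasurableSet) hanti ⟨0, measure_ne_top _ _⟩
        rw [hseteq] at htend
        exact ge_of_tendsto htend (Filter.Eventually.of_forall hseq)
      have hG0 : μ (Iio x₀) ≤ ENNReal.ofReal u := by
        have hseq : ∀ n : ℕ, μ (Iic (x₀ - 1/((n:ℝ)+1))) ≤ ENNReal.ofReal u := by
          intro n
          refine (hSup _ ?_).le
          have : (0:ℝ) < 1/((n:ℝ)+1) := by positivity
          linarith
        have hseteq : (⋃ n : ℕ, Iic (x₀ - 1/((n:ℝ)+1))) = Iio x₀ := by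
          ext x
          simp only [mem_iUnion, mem_Iic, mem_Iio]
          constructor
          · rintro ⟨n, hn⟩
            have : (0:ℝ) < 1/((n:ℝ)+1) := by positivity
            linarith
          · intro hx
            obtain ⟨n, hn⟩ := exists_nat_one_div_lt (sub_pos.2 hx)
            exact ⟨n, by linarith⟩
        have hmono : Monotone (fun n : ℕ => Iic (x₀ - 1/((n:ℝ)+1))) := fun n m h =>
          Iic_subset_Iic.2 (by linarith [hone_div h])
        have htend := tendsto_measure_iUnion_atTop (μ := μ) hmono
        rw [hseteq] at htend
        exact le_of_tendsto htend (Filter.Eventually.of_forall hseq)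
      have hG0r : g x₀ ≤ u := by
        have h := ENNReal.toReal_mono ENNReal.ofReal_ne_top hG0
        rwa [ENNReal.toReal_ofReal hupos.le] at h
      have hF0r : u ≤ g x₀ + d x₀ := by
        rw [hgF]
        have h := ENNReal.toReal_mono (measure_ne_top _ _) hF0
        rwa [ENNReal.toReal_ofReal hupos.le] at h
      set B : Set ℝ := {t : ℝ | t * d x₀ ≤ u - g x₀} with hBdef
      have hBm : MeasurableSet B := measurableSet_le (measurable_id.mul_const _) measurable_const
      set E : Set Ω := X ⁻¹' Iio x₀ ∪ (X ⁻¹' {x₀} ∩ θ ⁻¹' B) with hEdef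
      have hT : P (X ⁻¹' {x | μ (Iio x) = ENNReal.ofReal u ∧ μ (Iic x) = ENNReal.ofReal u}) = 0 :=
        le_antisymm (le_trans (Measure.le_map_apply hX.aemeasurable _)
          (le_of_eq (level_null μ _))) zero_le
      have hTae : ∀ᵐ ω ∂P,
          ¬ (μ (Iio (X ω)) = ENNReal.ofReal u ∧ μ (Iic (X ω)) = ENNReal.ofReal u) := by
        rw [ae_iff]
        simp only [not_not]
        exact hT
      have hcong : P {ω | U ω ≤ u} = P E := by
        apply measure_congr
        rw [Filter.eventuallyEq_set]
        filter_upwards [hθmem, hθne0, hTae] with ω hθ01 hθn0 hXT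
        obtain ⟨hθ0, hθ1⟩ := hθ01
        have hθpos : 0 < θ ω := lt_of_le_of_ne hθ0 (Ne.symm hθn0)
        simp only [mem_setOf_eq, hEdef, mem_union, mem_inter_iff, mem_preimage, mem_Iio,
          mem_singleton_iff, hBdef]
        rw [hUdef]
        simp only
        constructor
        · intro hU
          rcases lt_trichotomy (X ω) x₀ with h | h | h
          · exact Or.inl h
          · refine Or.inr ⟨h, ?_⟩
            rw [h] at hU
            linarith
          · exfalso
            have hgxc : ENNReal.ofReal u ≤ μ (Iio (X ω)) :=
              le_trans hF0 (measure_mono (Iic_subset_Iio.2 h))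
            have hgr : u ≤ g (X ω) := by
              have h2 := ENNReal.toReal_mono (measure_ne_top _ _) hgxc
              rwa [ENNReal.toReal_ofReal hupos.le] at h2
            have hθd : 0 ≤ θ ω * d (X ω) := mul_nonneg hθpos.le (hdnn _)
            have hd0 : d (X ω) = 0 := by nlinarith [hdnn (X ω)]
            have hgu : g (X ω) = u := by nlinarith
            apply hXT
            have hio : μ (Iio (X ω)) = ENNReal.ofReal u := by
              rw [← ENNReal.ofReal_toReal (measure_ne_top μ (Iio (X ω)))]
              rw [show (μ (Iio (X ω))).toReal = u from hgu]
            have hsx : μ {X ω} = 0 := by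
              rcases (ENNReal.toReal_eq_zero_iff _).1 hd0 with h' | h'
              · exact h'
              · exact absurd h' (measure_ne_top _ _)
            refine ⟨hio, ?_⟩
            have hsplit : μ (Iic (X ω)) = μ (Iio (X ω)) + μ {X ω} := by
              rw [← Iio_union_right, measure_union (by simp) (measurableSet_singleton _)]
            rw [hsplit, hsx, add_zero, hio]
        · rintro (h | ⟨h, hB'⟩)
          · have hF' : μ (Iic (X ω)) < ENNReal.ofReal u := hSup _ h
            have hFr : F (X ω) ≤ u := by
              have h2 := ENNReal.toReal_mono ENNReal.ofReal_ne_top hF'.le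
              rwa [ENNReal.toReal_ofReal hupos.le] at h2
            have h1 : θ ω * d (X ω) ≤ d (X ω) := by nlinarith [hdnn (X ω)]
            have h2 := hgF (X ω)
            linarith
          · rw [h]
            linarith
      have hdisj : Disjoint (X ⁻¹' Iio x₀) (X ⁻¹' {x₀} ∩ θ ⁻¹' B) := by
        rw [Set.disjoint_left]
        rintro ω hω ⟨h1, _⟩
        rw [mem_preimage, mem_singleton_iff] at h1
        rw [mem_preimage, mem_Iio, h1] at hω
        exact lt_irrefl _ hω
      have hmeas2 : MeasurableSet (X ⁻¹' {x₀} ∩ θ ⁻¹' B) :=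
        (hX (measurableSet_singleton _)).inter (hθ hBm)
      have hPE : P E = μ (Iio x₀) + μ {x₀} * P (θ ⁻¹' B) := by
        rw [hEdef, measure_union hdisj hmeas2]
        have e1 : P (X ⁻¹' Iio x₀) = μ (Iio x₀) :=
          (Measure.map_apply hX measurableSet_Iio).symm
        have e2 : P (X ⁻¹' {x₀} ∩ θ ⁻¹' B) = μ {x₀} * P (θ ⁻¹' B) := by
          rw [hind.measure_inter_preimage_eq_mul _ _ (measurableSet_singleton _) hBm,
            hμdef, Measure.map_apply hX (measurableSet_singleton _)]
        rw [e1, e2]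
      rw [hcong, hPE]
      have e3 : μ (Iio x₀) = ENNReal.ofReal (g x₀) :=
        (ENNReal.ofReal_toReal (measure_ne_top _ _)).symm
      have e4 : μ {x₀} = ENNReal.ofReal (d x₀) :=
        (ENNReal.ofReal_toReal (measure_ne_top _ _)).symm
      by_cases hd0 : d x₀ = 0
      · have hμx0 : μ {x₀} = 0 := by
          rcases (ENNReal.toReal_eq_zero_iff _).1 hd0 with h' | h'
          · exact h'
          · exact absurd h' (measure_ne_top _ _)
        rw [hμx0, zero_mul, add_zero, e3]
        congr 1
        linarith [hF0r]
      · have hdpos : 0 < d x₀ := lt_of_le_of_ne (hdnn _) (Ne.symm hd0)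
        have hBeq : B = Iic ((u - g x₀) / d x₀) := by
          ext t
          simp only [hBdef, mem_setOf_eq, mem_Iic]
          rw [le_div_iff₀ hdpos]
        have hc0 : 0 ≤ (u - g x₀) / d x₀ := div_nonneg (by linarith) hdpos.le
        have hc1 : (u - g x₀) / d x₀ ≤ 1 := (div_le_one hdpos).2 (by linarith)
        rw [hBeq, hθIic, min_eq_left hc1, e3, e4,
          ← ENNReal.ofReal_mul (hdnn _), ← ENNReal.ofReal_add (hgnn _)
            (mul_nonneg (hdnn _) hc0)]
        congr 1
        have harith : d x₀ * ((u - g x₀) / d x₀) = u - g x₀ := by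
          field_simp
        linarith
  refine ⟨?_, ?_⟩
  · rw [hfun]
    haveI : IsProbabilityMeasure (Measure.map U P) :=
      Measure.isProbabilityMeasure_map hUm.aemeasurable
    haveI : IsFiniteMeasure (volume.restrict (Icc (0:ℝ) 1)) := by
      constructor
      rw [Measure.restrict_apply MeasurableSet.univ, univ_inter, Real.volume_Icc]
      simp
    refine Measure.ext_of_Iic (Measure.map U P) (volume.restrict (Icc 0 1)) (fun a => ?_)
    rw [Measure.map_apply hUm measurableSet_Iic, hres]
    exact key a
  · have hXpos : ∀ᵐ ω ∂P, 0 < X ω := by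
      rw [ae_iff]
      refine measure_mono_null (fun ω h => not_lt.1 h) ?_
      exact le_antisymm (by have h := hpv 0 ⟨le_refl 0, zero_le_one⟩; rw [ENNReal.ofReal_zero] at h; exact h) zero_le
    filter_upwards [hθmem, hXpos] with ω hθ01 hX0
    rw [hlt, heqx]
    have hg' : (μ (Iio (X ω))).toReal = g (X ω) := rfl
    have hd' : (μ {X ω}).toReal = d (X ω) := rfl
    rw [hg', hd']
    have h1 : θ ω * d (X ω) ≤ d (X ω) := by nlinarith [hθ01.1, hθ01.2, hdnn (X ω)]
    have h2 := hgF (X ω)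
    rcases le_or_gt (X ω) 1 with h | h
    · have h3 := hpv (X ω) ⟨hX0.le, h⟩
      have e : P {ω' | X ω' ≤ X ω} = μ (Iic (X ω)) :=
        (Measure.map_apply hX measurableSet_Iic).symm
      rw [e] at h3
      have h4 := ENNReal.toReal_mono ENNReal.ofReal_ne_top h3
      rw [ENNReal.toReal_ofReal hX0.le] at h4
      have hF' : F (X ω) ≤ X ω := h4
      linarith
    · have h3 := hFle1 (X ω)
      linarith
end

section
/- Monotone merging of conservative p-values: let F : [0,1]^K → [0,∞) be an increasing Borel function such that F(U_1,...,U_K) is a p-value function whenever U_1,...,U_K are uniform on [0,1] (with arbitrary dependence). Then for any p-value functions P_1,...,P_K (on a common probability space), F(P_1,...,P_K) is also a p-value function. -/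
open MeasureTheory Set
open scoped ENNReal

namespace MergingAux

noncomputable def lam : Measure ℝ := volume.restrict (Icc (0:ℝ) 1)

instance : IsProbabilityMeasure lam := by
  constructor
  rw [lam, Measure.restrict_apply MeasurableSet.univ, univ_inter, Real.volume_Icc]
  norm_num

noncomputable def A (μ : Measure ℝ) (t : ℝ) : ℝ := (μ (Iio t)).toReal
noncomputable def C (μ : Measure ℝ) (t : ℝ) : ℝ := (μ (Iic t)).toReal

noncomputable def G (μ : Measure ℝ) (p : ℝ × ℝ) : ℝ := A μ p.1 + p.2 * (C μ p.1 - A μ p.1)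

variable (μ : Measure ℝ) [IsProbabilityMeasure μ]

lemma monoA : Monotone (A μ) := fun _ _ hst =>
  ENNReal.toReal_mono (measure_ne_top _ _) (measure_mono (Iio_subset_Iio hst))

lemma monoC : Monotone (C μ) := fun _ _ hst =>
  ENNReal.toReal_mono (measure_ne_top _ _) (measure_mono (Iic_subset_Iic.2 hst))

lemma A_le_C (t : ℝ) : A μ t ≤ C μ t :=
  ENNReal.toReal_mono (measure_ne_top _ _) (measure_mono Iio_subset_Iic_self)

lemma A_nonneg (t : ℝ) : 0 ≤ A μ t := ENNReal.toReal_nonneg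

lemma C_le_one (t : ℝ) : C μ t ≤ 1 := by
  have := prob_le_one (μ := μ) (s := Iic t)
  simpa [C] using ENNReal.toReal_mono (by simp) this

lemma ofReal_A (t : ℝ) : ENNReal.ofReal (A μ t) = μ (Iio t) :=
  ENNReal.ofReal_toReal (measure_ne_top _ _)

lemma ofReal_C (t : ℝ) : ENNReal.ofReal (C μ t) = μ (Iic t) :=
  ENNReal.ofReal_toReal (measure_ne_top _ _)

lemma C_le_iff (t : ℝ) {x : ℝ} (hx : 0 ≤ x) : C μ t ≤ x ↔ μ (Iic t) ≤ ENNReal.ofReal x := by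
  rw [← ofReal_C μ t, ENNReal.ofReal_le_ofReal_iff hx]

lemma measurableG : Measurable (G μ) :=
  ((monoA μ).measurable.comp measurable_fst).add
    (measurable_snd.mul (((monoC μ).measurable.sub (monoA μ).measurable).comp measurable_fst))

lemma cross_le {s t : ℝ} (hst : s < t) : C μ s ≤ A μ t :=
  ENNReal.toReal_mono (measure_ne_top _ _) (measure_mono (fun x hx => lt_of_le_of_lt hx hst))



lemma slice (u t : ℝ) :
    lam {v : ℝ | A μ t + v * (C μ t - A μ t) ≤ u} =
      ({s | C μ s ≤ u}.indicator (fun _ => 1) t)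
      + ({s | A μ s ≤ u ∧ u < C μ s}.indicator
          (fun s => ENNReal.ofReal ((u - A μ s) / (C μ s - A μ s))) t) := by
  have hmeas : MeasurableSet {v : ℝ | A μ t + v * (C μ t - A μ t) ≤ u} :=
    measurableSet_le ((measurable_id.mul_const _).const_add _) measurable_const
  have hd : 0 ≤ C μ t - A μ t := sub_nonneg.2 (A_le_C μ t)
  rw [lam, Measure.restrict_apply hmeas]
  by_cases h1 : C μ t ≤ u
  · have hsub : Icc (0:ℝ) 1 ⊆ {v : ℝ | A μ t + v * (C μ t - A μ t) ≤ u} := by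
      intro v hv
      have : v * (C μ t - A μ t) ≤ C μ t - A μ t := by nlinarith [hv.1, hv.2]
      simp only [mem_setOf_eq]; linarith
    rw [inter_eq_self_of_subset_right hsub, Real.volume_Icc]
    have h2 : ¬ (A μ t ≤ u ∧ u < C μ t) := fun h => absurd h1 (not_le.2 h.2)
    rw [indicator_of_mem (show t ∈ {s | C μ s ≤ u} from h1) (fun _ => (1:ℝ≥0∞)),
      indicator_of_notMem (show t ∉ {s | A μ s ≤ u ∧ u < C μ s} from h2)]
    norm_num
  · push_neg at h1
    by_cases h2 : A μ t ≤ u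
    · have hdpos : 0 < C μ t - A μ t := by linarith
      have hset : {v : ℝ | A μ t + v * (C μ t - A μ t) ≤ u} ∩ Icc (0:ℝ) 1
          = Icc (0:ℝ) ((u - A μ t) / (C μ t - A μ t)) := by
        ext v
        simp only [mem_inter_iff, mem_setOf_eq, mem_Icc]
        constructor
        · rintro ⟨hv, h0, _⟩
          exact ⟨h0, (le_div_iff₀ hdpos).2 (by linarith)⟩
        · rintro ⟨h0, hv⟩
          have hv' : v * (C μ t - A μ t) ≤ u - A μ t := (le_div_iff₀ hdpos).1 hv
          have hlt1 : (u - A μ t) / (C μ t - A μ t) < 1 := (div_lt_one hdpos).2 (by linarith)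
          exact ⟨by linarith, h0, by linarith⟩
      rw [hset, Real.volume_Icc]
      rw [indicator_of_notMem (by simpa using h1) (fun _ => (1:ℝ≥0∞)),
        indicator_of_mem (by exact ⟨h2, h1⟩)]
      norm_num
    · push_neg at h2
      have hset : {v : ℝ | A μ t + v * (C μ t - A μ t) ≤ u} ∩ Icc (0:ℝ) 1 = ∅ := by
        ext v
        simp only [mem_inter_iff, mem_setOf_eq, mem_Icc, mem_empty_iff_false, iff_false, not_and]
        intro hv h0 _
        nlinarith [mul_nonneg h0 hd]
      rw [hset]
      rw [indicator_of_notMem (show t ∉ {s | C μ s ≤ u} from not_le.2 h1) (fun _ => (1:ℝ≥0∞)),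
        indicator_of_notMem (show t ∉ {s | A μ s ≤ u ∧ u < C μ s} from
          fun h => absurd h.1 (not_le.2 h2))]
      simp

lemma iUnion_Iic_eq_Iio (s : ℝ) : (⋃ n : ℕ, Iic (s - ((n:ℝ)+1)⁻¹)) = Iio s := by
  ext x
  simp only [mem_iUnion, mem_Iic, mem_Iio]
  constructor
  · rintro ⟨n, hn⟩
    have : (0:ℝ) < ((n:ℝ)+1)⁻¹ := by positivity
    linarith
  · intro hx
    have hpos : 0 < s - x := by linarith
    obtain ⟨n, hn⟩ := exists_nat_gt (s - x)⁻¹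
    refine ⟨n, ?_⟩
    have h1 : (s - x) * (s - x)⁻¹ = 1 := mul_inv_cancel₀ (ne_of_gt hpos)
    have h2 : (0:ℝ) < (n:ℝ) + 1 := by positivity
    have h3 : ((n:ℝ)+1)⁻¹ * ((n:ℝ)+1) = 1 := inv_mul_cancel₀ (ne_of_gt h2)
    nlinarith [inv_nonneg.2 h2.le]
lemma iInter_Iio_eq_Iic (s : ℝ) : (⋂ n : ℕ, Iio (s + ((n:ℝ)+1)⁻¹)) = Iic s := by
  ext x
  simp only [mem_iInter, mem_Iio, mem_Iic]
  constructor
  · intro h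
    by_contra hx
    push_neg at hx
    have hpos : 0 < x - s := by linarith
    obtain ⟨n, hn⟩ := exists_nat_gt (x - s)⁻¹
    have h1 : (x - s) * (x - s)⁻¹ = 1 := mul_inv_cancel₀ (ne_of_gt hpos)
    have h2 : (0:ℝ) < (n:ℝ) + 1 := by positivity
    have h3 : ((n:ℝ)+1)⁻¹ * ((n:ℝ)+1) = 1 := inv_mul_cancel₀ (ne_of_gt h2)
    have := h n
    nlinarith [inv_nonneg.2 h2.le]
  · intro hx n
    have : (0:ℝ) < ((n:ℝ)+1)⁻¹ := by positivity
    linarith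

lemma iInter_Iic_neg : (⋂ n : ℕ, Iic (-(n:ℝ))) = (∅ : Set ℝ) := by
  ext x
  simp only [mem_iInter, mem_Iic, mem_empty_iff_false, iff_false, not_forall]
  obtain ⟨n, hn⟩ := exists_nat_gt (-x)
  exact ⟨n, by push_neg; linarith⟩

lemma unif (u : ℝ) (hu : u ∈ Icc (0:ℝ) 1) :
    (μ.prod lam) {p : ℝ × ℝ | G μ p ≤ u} = ENNReal.ofReal u := by
  have hS1meas : MeasurableSet {s : ℝ | C μ s ≤ u} :=
    measurableSet_le (monoC μ).measurable measurable_const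
  have hTmeas : MeasurableSet {s : ℝ | A μ s ≤ u ∧ u < C μ s} := by
    have h1 : MeasurableSet {s : ℝ | A μ s ≤ u} :=
      measurableSet_le (monoA μ).measurable measurable_const
    have h2 : MeasurableSet {s : ℝ | u < C μ s} :=
      measurableSet_lt measurable_const (monoC μ).measurable
    exact h1.inter h2
  have hSmeas : MeasurableSet {p : ℝ × ℝ | G μ p ≤ u} :=
    measurableSet_le (measurableG μ) measurable_const
  have hlamsf : SFinite lam := by unfold lam; infer_instance
  rw [Measure.prod_apply hSmeas]
  have hrw : (fun t => lam (Prod.mk t ⁻¹' {p : ℝ × ℝ | G μ p ≤ u}))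
      = fun t => (({s | C μ s ≤ u}.indicator (fun _ => 1) t)
        + ({s | A μ s ≤ u ∧ u < C μ s}.indicator
            (fun s => ENNReal.ofReal ((u - A μ s) / (C μ s - A μ s))) t)) := by
    funext t
    have : (Prod.mk t ⁻¹' {p : ℝ × ℝ | G μ p ≤ u})
        = {v : ℝ | A μ t + v * (C μ t - A μ t) ≤ u} := rfl
    rw [this, slice μ u t]
  rw [hrw, lintegral_add_left (measurable_const.indicator hS1meas),
    lintegral_indicator hS1meas, lintegral_indicator hTmeas, setLIntegral_one]
  by_cases hT : {s : ℝ | A μ s ≤ u ∧ u < C μ s} = ∅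
  · rw [hT]
    simp only [Measure.restrict_empty, lintegral_zero_measure, add_zero]
    have hTempty : ∀ t : ℝ, A μ t ≤ u → C μ t ≤ u := by
      intro t hAt
      by_contra hC
      exact absurd (eq_empty_iff_forall_notMem.1 hT t) (by simp [hAt, not_le.1 hC])
    by_cases hall : ∀ t : ℝ, C μ t ≤ u
    · have hS1 : {s : ℝ | C μ s ≤ u} = univ := eq_univ_of_forall hall
      rw [hS1, measure_univ]
      have hle : (1:ℝ≥0∞) ≤ ENNReal.ofReal u := by
        have htend := tendsto_measure_Iic_atTop (α := ℝ) μ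
        rw [measure_univ] at htend
        refine le_of_tendsto htend (Filter.Eventually.of_forall fun x => ?_)
        rw [← ofReal_C μ x]
        exact ENNReal.ofReal_le_ofReal (hall x)
      exact le_antisymm hle (by simpa using ENNReal.ofReal_le_ofReal hu.2)
    · push_neg at hall
      by_cases hne : ∃ t : ℝ, C μ t ≤ u
      · -- S1 nonempty, bounded above
        obtain ⟨t₁, ht₁⟩ := hall
        have hbdd : BddAbove {s : ℝ | C μ s ≤ u} := by
          refine ⟨t₁, fun t ht => ?_⟩
          by_contra hlt
          push_neg at hlt
          exact absurd (le_trans (monoC μ hlt.le) ht) (not_le.2 ht₁)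
        obtain ⟨t₂, ht₂⟩ := hne
        have hSne : {s : ℝ | C μ s ≤ u}.Nonempty := ⟨t₂, ht₂⟩
        set s := sSup {s : ℝ | C μ s ≤ u} with hs
        have hIio : Iio s ⊆ {s : ℝ | C μ s ≤ u} := by
          intro t ht
          obtain ⟨t', ht', htt'⟩ := exists_lt_of_lt_csSup hSne ht
          exact le_trans (monoC μ htt'.le) ht'
        have hAs : A μ s ≤ u := by
          have hμIio : μ (Iio s) ≤ ENNReal.ofReal u := by
            rw [← iUnion_Iic_eq_Iio s]
            have htend := tendsto_measure_iUnion_atTop (μ := μ)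
              (s := fun n : ℕ => Iic (s - ((n:ℝ)+1)⁻¹))
              (fun n m hnm => Iic_subset_Iic.2 (by
                have : ((m:ℝ)+1)⁻¹ ≤ ((n:ℝ)+1)⁻¹ := by
                  apply inv_anti₀ (by positivity)
                  exact_mod_cast by linarith [(Nat.cast_le (α := ℝ)).2 hnm]
                linarith))
            refine le_of_tendsto htend (Filter.Eventually.of_forall fun n => ?_)
            simp only [Function.comp_apply]
            have hlt : s - ((n:ℝ)+1)⁻¹ < s := by
              have : (0:ℝ) < ((n:ℝ)+1)⁻¹ := by positivity
              linarith
            have := hIio hlt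
            rw [← ofReal_C μ _]
            exact ENNReal.ofReal_le_ofReal this
          have := ENNReal.toReal_mono ENNReal.ofReal_ne_top hμIio
          rwa [ENNReal.toReal_ofReal hu.1] at this
        have hCs : C μ s ≤ u := hTempty s hAs
        have hS1 : {s' : ℝ | C μ s' ≤ u} = Iic s := by
          apply Subset.antisymm
          · exact fun t ht => le_csSup hbdd ht
          · exact fun t ht => le_trans (monoC μ ht) hCs
        rw [hS1]
        have hge : ENNReal.ofReal u ≤ μ (Iic s) := by
          rw [← iInter_Iio_eq_Iic s]
          have htend := tendsto_measure_iInter_atTop (μ := μ)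
            (s := fun n : ℕ => Iio (s + ((n:ℝ)+1)⁻¹))
            (fun n => measurableSet_Iio.nullMeasurableSet)
            (fun n m hnm => Iio_subset_Iio (by
              have : ((m:ℝ)+1)⁻¹ ≤ ((n:ℝ)+1)⁻¹ := by
                apply inv_anti₀ (by positivity)
                exact_mod_cast by linarith [(Nat.cast_le (α := ℝ)).2 hnm]
              linarith))
            ⟨0, measure_ne_top _ _⟩
          refine ge_of_tendsto htend (Filter.Eventually.of_forall fun n => ?_)
          simp only [Function.comp_apply]
          have hgt : s < s + ((n:ℝ)+1)⁻¹ := by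
            have : (0:ℝ) < ((n:ℝ)+1)⁻¹ := by positivity
            linarith
          have hnotin : ¬ C μ (s + ((n:ℝ)+1)⁻¹) ≤ u := by
            intro hmem
            exact absurd (le_csSup hbdd hmem) (not_le.2 hgt)
          have hAgt : u < A μ (s + ((n:ℝ)+1)⁻¹) := by
            by_contra hA
            push_neg at hA
            exact hnotin (hTempty _ hA)
          rw [← ofReal_A μ _]
          exact ENNReal.ofReal_le_ofReal hAgt.le
        have hle : μ (Iic s) ≤ ENNReal.ofReal u := by
          rw [← ofReal_C μ s]; exact ENNReal.ofReal_le_ofReal hCs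
        exact le_antisymm hle hge
      · -- S1 empty
        push_neg at hne
        have hS1 : {s : ℝ | C μ s ≤ u} = (∅ : Set ℝ) :=
          eq_empty_iff_forall_notMem.2 fun t => not_le.2 (hne t)
        rw [hS1, measure_empty]
        have hAgt : ∀ t : ℝ, u < A μ t := by
          intro t
          by_contra hA
          push_neg at hA
          exact absurd (hTempty t hA) (not_le.2 (hne t))
        have hle0 : ENNReal.ofReal u ≤ 0 := by
          have htend := tendsto_measure_iInter_atTop (μ := μ)
            (s := fun n : ℕ => Iic (-(n:ℝ)))
            (fun n => measurableSet_Iic.nullMeasurableSet)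
            (fun n m hnm => Iic_subset_Iic.2 (neg_le_neg ((Nat.cast_le (α := ℝ)).2 hnm)))
            ⟨0, measure_ne_top _ _⟩
          rw [iInter_Iic_neg, measure_empty] at htend
          refine ge_of_tendsto htend (Filter.Eventually.of_forall fun n => ?_)
          calc ENNReal.ofReal u ≤ ENNReal.ofReal (A μ (-(n:ℝ))) :=
                ENNReal.ofReal_le_ofReal (hAgt _).le
            _ = μ (Iio (-(n:ℝ))) := ofReal_A μ _
            _ ≤ μ (Iic (-(n:ℝ))) := measure_mono Iio_subset_Iic_self
        have : ENNReal.ofReal u = 0 := le_antisymm hle0 zero_le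
        rw [this]
  · -- T nonempty: a single atom t₀
    obtain ⟨t₀, ht₀⟩ := nonempty_iff_ne_empty.2 hT
    have hTsing : {s : ℝ | A μ s ≤ u ∧ u < C μ s} = {t₀} := by
      apply Subset.antisymm
      · intro t ht
        by_contra hne
        rcases lt_or_gt_of_ne hne with h | h
        · exact absurd (le_trans (cross_le μ h) ht₀.1) (not_le.2 ht.2)
        · exact absurd (le_trans (cross_le μ h) ht.1) (not_le.2 ht₀.2)
      · intro t ht
        rw [mem_singleton_iff] at ht
        rw [ht]; exact ht₀
    have hatom : μ {t₀} = ENNReal.ofReal (C μ t₀ - A μ t₀) := by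
      have hsplit : μ (Iic t₀) = μ (Iio t₀) + μ {t₀} := by
        rw [← Iio_union_right, measure_union (by simp) (measurableSet_singleton t₀)]
      have htr : C μ t₀ = A μ t₀ + (μ {t₀}).toReal := by
        rw [C, A, hsplit, ENNReal.toReal_add (measure_ne_top _ _) (measure_ne_top _ _)]
      rw [htr]
      simp only [add_sub_cancel_left]
      exact (ENNReal.ofReal_toReal (measure_ne_top _ _)).symm
    have hdpos : 0 < C μ t₀ - A μ t₀ := by linarith [ht₀.1, ht₀.2]
    have hS1 : {s : ℝ | C μ s ≤ u} = Iio t₀ := by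
      ext t
      simp only [mem_setOf_eq, mem_Iio]
      constructor
      · intro ht
        by_contra hge
        push_neg at hge
        exact absurd (le_trans (monoC μ hge) ht) (not_le.2 ht₀.2)
      · intro ht
        exact le_trans (cross_le μ ht) ht₀.1
    rw [hTsing, hS1, lintegral_singleton, hatom]
    rw [← ENNReal.ofReal_mul (div_nonneg (by linarith [ht₀.1]) hdpos.le), div_mul_cancel₀ _ (ne_of_gt hdpos)]
    rw [← ofReal_A μ t₀, ← ENNReal.ofReal_add (A_nonneg μ t₀) (by linarith [ht₀.1])]
    congr 1
    ring

lemma map_G : Measure.map (G μ) (μ.prod lam) = lam := by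
  refine Measure.ext_of_Iic _ _ fun x => ?_
  rw [Measure.map_apply (measurableG μ) measurableSet_Iic]
  have hpre : G μ ⁻¹' Iic x = {p : ℝ × ℝ | G μ p ≤ x} := rfl
  have hlamIic : lam (Iic x) = volume (Iic x ∩ Icc (0:ℝ) 1) := by
    rw [lam, Measure.restrict_apply measurableSet_Iic]
  rcases lt_or_ge x 0 with hx | hx
  · have h0 : Iic x ∩ Icc (0:ℝ) 1 = ∅ := by
      ext v
      simp only [mem_inter_iff, mem_Iic, mem_Icc, mem_empty_iff_false, iff_false, not_and]
      intro h1 h2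
      linarith [h2]
    rw [hpre, hlamIic, h0, measure_empty]
    refine measure_mono_null (t := (univ : Set ℝ) ×ˢ (Icc (0:ℝ) 1)ᶜ) (fun p hp => ?_) ?_
    · show p ∈ (univ : Set ℝ) ×ˢ (Icc (0:ℝ) 1)ᶜ
      simp only [mem_prod, mem_univ, true_and, mem_compl_iff, mem_Icc, not_and]
      intro h0v h1v
      have hd : 0 ≤ C μ p.1 - A μ p.1 := sub_nonneg.2 (A_le_C μ p.1)
      have := A_nonneg μ p.1
      have hG : G μ p ≤ x := hp
      have : 0 ≤ p.2 * (C μ p.1 - A μ p.1) := mul_nonneg h0v hd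
      simp only [G] at hG
      linarith
    · rw [Measure.prod_prod, measure_univ, one_mul, lam,
        Measure.restrict_apply measurableSet_Icc.compl, compl_inter_self, measure_empty]
  rcases le_or_gt x 1 with hx1 | hx1
  · rw [hpre, unif μ x ⟨hx, hx1⟩, hlamIic]
    have h0 : Iic x ∩ Icc (0:ℝ) 1 = Icc 0 x := by
      ext v
      simp only [mem_inter_iff, mem_Iic, mem_Icc]
      constructor
      · rintro ⟨h1, h2, _⟩; exact ⟨h2, h1⟩
      · rintro ⟨h1, h2⟩; exact ⟨h2, h1, by linarith⟩
    rw [h0, Real.volume_Icc, sub_zero]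
  · have hsub : (univ : Set ℝ) ×ˢ Icc (0:ℝ) 1 ⊆ {p : ℝ × ℝ | G μ p ≤ x} := by
      rintro ⟨t, v⟩ hp
      simp only [mem_prod, mem_univ, true_and, mem_Icc] at hp
      have hd : 0 ≤ C μ t - A μ t := sub_nonneg.2 (A_le_C μ t)
      have h1 : v * (C μ t - A μ t) ≤ C μ t - A μ t := by nlinarith [hp.1, hp.2]
      have h2 : C μ t ≤ 1 := C_le_one μ t
      simp only [mem_setOf_eq, G]
      linarith
    have hone : (μ.prod lam) ((univ : Set ℝ) ×ˢ Icc (0:ℝ) 1) = 1 := by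
      rw [Measure.prod_prod, measure_univ, one_mul, lam,
        Measure.restrict_apply measurableSet_Icc, inter_self, Real.volume_Icc]
      norm_num
    have hge : 1 ≤ (μ.prod lam) (G μ ⁻¹' Iic x) := by
      rw [hpre, ← hone]
      exact measure_mono hsub
    have hle : (μ.prod lam) (G μ ⁻¹' Iic x) ≤ 1 := prob_le_one
    rw [le_antisymm hle hge, hlamIic]
    have h0 : Iic x ∩ Icc (0:ℝ) 1 = Icc 0 1 :=
      inter_eq_self_of_subset_right (fun v hv => le_trans hv.2 hx1.le)
    rw [h0, Real.volume_Icc]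
    norm_num

end MergingAux

universe u

/-- If the increasing Borel function `F` merges arbitrarily dependent uniform random
variables into a p-value, then it also merges arbitrary (possibly conservative)
p-value functions into a p-value function. -/
theorem merging_of_conservative_pvalues {K : ℕ} (F : (Fin K → ℝ) → ℝ)
    (hFmono : Monotone F) (hFmeas : Measurable F) (hF0 : ∀ u, 0 ≤ F u)
    (hmerge : ∀ (Ω' : Type u) (_ : MeasurableSpace Ω') (Q : Measure Ω'),
      IsProbabilityMeasure Q →
      ∀ U : Fin K → Ω' → ℝ, (∀ k, Measurable (U k)) →
      (∀ k, Measure.map (U k) Q = volume.restrict (Icc (0:ℝ) 1)) →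
      ∀ ε ∈ Icc (0:ℝ) 1, Q {ω | F (fun k => U k ω) ≤ ε} ≤ ENNReal.ofReal ε)
    {Ω : Type u} [MeasurableSpace Ω] (P : Measure Ω) [IsProbabilityMeasure P]
    (X : Fin K → Ω → ℝ) (hX : ∀ k, Measurable (X k))
    (hpv : ∀ k, ∀ ε ∈ Icc (0:ℝ) 1, P {ω | X k ω ≤ ε} ≤ ENNReal.ofReal ε)
    (ε : ℝ) (hε : ε ∈ Icc (0:ℝ) 1) :
    P {ω | F (fun k => X k ω) ≤ ε} ≤ ENNReal.ofReal ε := by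
  classical
  set Q : Measure (Ω × ℝ) := P.prod MergingAux.lam with hQdef
  haveI hQprob : IsProbabilityMeasure Q := by rw [hQdef]; infer_instance
  haveI hPk : ∀ k : Fin K, IsProbabilityMeasure (P.map (X k)) :=
    fun k => Measure.isProbabilityMeasure_map (hX k).aemeasurable
  set U : Fin K → Ω × ℝ → ℝ :=
    fun k p => MergingAux.G (P.map (X k)) (X k p.1, p.2) with hUdef
  have hUmeas : ∀ k, Measurable (U k) := fun k =>
    (MergingAux.measurableG (P.map (X k))).comp
      (((hX k).comp measurable_fst).prodMk measurable_snd)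
  have hUmap : ∀ k, Measure.map (U k) Q = volume.restrict (Icc (0:ℝ) 1) := by
    intro k
    haveI := hPk k
    have h1 : U k = (MergingAux.G (P.map (X k))) ∘ (Prod.map (X k) id) := rfl
    have h2 : Measure.map (Prod.map (X k) id) Q = (P.map (X k)).prod MergingAux.lam := by
      rw [hQdef, ← Measure.map_prod_map _ _ (hX k) measurable_id, Measure.map_id]
    rw [h1, ← Measure.map_map (MergingAux.measurableG (P.map (X k)))
        ((hX k).prodMap measurable_id), h2, MergingAux.map_G]
    rfl
  have hμpv : ∀ k, ∀ t, 0 ≤ t → t ≤ 1 → (P.map (X k)) (Iic t) ≤ ENNReal.ofReal t := by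
    intro k t ht0 ht1
    rw [Measure.map_apply (hX k) measurableSet_Iic]
    exact hpv k t ⟨ht0, ht1⟩
  have hnull : ∀ k, P {ω | X k ω ≤ 0} = 0 := by
    intro k
    have := hpv k 0 ⟨le_refl 0, zero_le_one⟩
    simpa using this
  have h1ae : ∀ᵐ p ∂Q, ∀ k, 0 < X k p.1 := by
    rw [MeasureTheory.ae_all_iff]
    intro k
    rw [MeasureTheory.ae_iff]
    have hset : {p : Ω × ℝ | ¬ 0 < X k p.1} = {ω | X k ω ≤ 0} ×ˢ univ := by
      ext p
      simp [not_lt]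
    rw [hset, hQdef, Measure.prod_prod, hnull k, zero_mul]
  have h2ae : ∀ᵐ p ∂Q, p.2 ∈ Icc (0:ℝ) 1 := by
    rw [MeasureTheory.ae_iff]
    have hset : {p : Ω × ℝ | ¬ p.2 ∈ Icc (0:ℝ) 1} = univ ×ˢ (Icc (0:ℝ) 1)ᶜ := by
      ext p
      simp
    rw [hset, hQdef, Measure.prod_prod, measure_univ, one_mul, MergingAux.lam,
      Measure.restrict_apply measurableSet_Icc.compl, compl_inter_self, measure_empty]
  have hdom : ∀ᵐ p ∂Q, ∀ k, U k p ≤ X k p.1 := by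
    filter_upwards [h1ae, h2ae] with p hp1 hp2
    intro k
    haveI := hPk k
    have ht0 : 0 < X k p.1 := hp1 k
    have hC : MergingAux.C (P.map (X k)) (X k p.1) ≤ X k p.1 := by
      rcases le_or_gt (X k p.1) 1 with h | h
      · have hb := hμpv k (X k p.1) ht0.le h
        have hb2 := ENNReal.toReal_mono ENNReal.ofReal_ne_top hb
        rwa [ENNReal.toReal_ofReal ht0.le] at hb2
      · exact le_trans (MergingAux.C_le_one (P.map (X k)) (X k p.1)) h.le
    have hA := MergingAux.A_le_C (P.map (X k)) (X k p.1)
    have hU : U k p = MergingAux.A (P.map (X k)) (X k p.1)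
        + p.2 * (MergingAux.C (P.map (X k)) (X k p.1)
          - MergingAux.A (P.map (X k)) (X k p.1)) := rfl
    rw [hU]
    nlinarith [hp2.1, hp2.2, mul_nonneg (sub_nonneg.2 hp2.2) (sub_nonneg.2 hA)]
  have hsub : {p : Ω × ℝ | F (fun k => X k p.1) ≤ ε} ≤ᵐ[Q]
      {p : Ω × ℝ | F (fun k => U k p) ≤ ε} := by
    filter_upwards [hdom] with p hp hple
    exact le_trans (hFmono fun k => hp k) hple
  calc P {ω | F (fun k => X k ω) ≤ ε}
      = Q {p : Ω × ℝ | F (fun k => X k p.1) ≤ ε} := by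
        have hset : {p : Ω × ℝ | F (fun k => X k p.1) ≤ ε}
            = {ω | F (fun k => X k ω) ≤ ε} ×ˢ univ := by
          ext p
          simp
        rw [hset, hQdef, Measure.prod_prod, measure_univ, mul_one]
    _ ≤ Q {p : Ω × ℝ | F (fun k => U k p) ≤ ε} := measure_mono_ae hsub
    _ ≤ ENNReal.ofReal ε := hmerge (Ω × ℝ) inferInstance Q hQprob U hUmeas hUmap ε hε
end

section
/- Let E ⊆ [0,1]^2 be a nonempty decreasing Borel set. Then the supremum over copular probability measures x on [0,1]^2 of x(E) equals min( inf{ u_1 + u_2 : (u_1,u_2) ∈ [0,1]^2 \ E }, 1 ), where the infimum over the empty set is +∞. -/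
open MeasureTheory Set

/-- A probability measure on `[0,1]^K` with all one-dimensional marginals uniform. -/
def IsCopular {K : ℕ} (x : Measure (Fin K → ℝ)) : Prop :=
  IsProbabilityMeasure x ∧
    ∀ k, Measure.map (fun u => u k) x = volume.restrict (Icc (0:ℝ) 1)

/-- Upper copular probability of a set. -/
noncomputable def ucp {K : ℕ} (E : Set (Fin K → ℝ)) : ENNReal :=
  ⨆ x : {x : Measure (Fin K → ℝ) // IsCopular x}, x.1 E

/-! ### Auxiliary construction -/

noncomputable def mu01 : Measure ℝ := volume.restrict (Icc 0 1)

noncomputable def fmap (s : ℝ) : ℝ → (Fin 2 → ℝ) :=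
  fun θ => ![θ, if θ ≤ s then s - θ else θ]

lemma gmeas (s : ℝ) : Measurable (fun θ : ℝ => if θ ≤ s then s - θ else θ) :=
  Measurable.ite measurableSet_Iic (measurable_const.sub measurable_id) measurable_id

lemma fmeas (s : ℝ) : Measurable (fmap s) := by
  rw [measurable_pi_iff]
  intro i
  fin_cases i
  · simpa [fmap] using measurable_id'
  · simpa [fmap] using gmeas s

lemma reflect_map (s : ℝ) :
    Measure.map (fun θ : ℝ => s - θ) (volume.restrict (Icc 0 s)) = volume.restrict (Icc 0 s) := by
  have hm : Measurable (fun θ : ℝ => s - θ) := measurable_const.sub measurable_id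
  ext A hA
  rw [Measure.map_apply hm hA, Measure.restrict_apply (hm hA), Measure.restrict_apply hA]
  have hpre : (fun θ : ℝ => s - θ) ⁻¹' (Icc 0 s) = Icc 0 s := by
    ext θ
    simp only [mem_preimage, mem_Icc, sub_nonneg]
    constructor
    · rintro ⟨h1, h2⟩; exact ⟨by linarith, h1⟩
    · rintro ⟨h1, h2⟩; exact ⟨h2, by linarith⟩
  calc volume ((fun θ : ℝ => s - θ) ⁻¹' A ∩ Icc 0 s)
      = volume ((fun θ : ℝ => s - θ) ⁻¹' (A ∩ Icc 0 s)) := by rw [preimage_inter, hpre]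
    _ = volume (A ∩ Icc 0 s) :=
        (Measure.measurePreserving_sub_left volume s).measure_preimage
          (hA.inter measurableSet_Icc).nullMeasurableSet

lemma g_map (s : ℝ) (h0 : 0 ≤ s) (h1 : s ≤ 1) :
    Measure.map (fun θ : ℝ => if θ ≤ s then s - θ else θ) mu01 = mu01 := by
  have hdisj : Disjoint (Icc (0:ℝ) s) (Ioc s 1) :=
    (Iic_disjoint_Ioc le_rfl).mono Icc_subset_Iic_self le_rfl
  have hsplit : mu01 = volume.restrict (Icc 0 s) + volume.restrict (Ioc s 1) := by
    rw [mu01, ← Icc_union_Ioc_eq_Icc h0 h1, Measure.restrict_union hdisj measurableSet_Ioc]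
  have hae1 : (fun θ : ℝ => if θ ≤ s then s - θ else θ)
      =ᵐ[volume.restrict (Icc 0 s)] (fun θ => s - θ) := by
    filter_upwards [self_mem_ae_restrict measurableSet_Icc] with θ hθ
    simp [hθ.2]
  have hae2 : (fun θ : ℝ => if θ ≤ s then s - θ else θ)
      =ᵐ[volume.restrict (Ioc s 1)] id := by
    filter_upwards [self_mem_ae_restrict measurableSet_Ioc] with θ hθ
    simp [not_le.mpr hθ.1]
  have h1' : Measure.map (fun θ : ℝ => if θ ≤ s then s - θ else θ)
      (volume.restrict (Icc 0 s)) = volume.restrict (Icc 0 s) :=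
    (Measure.map_congr hae1).trans (reflect_map s)
  have h2' : Measure.map (fun θ : ℝ => if θ ≤ s then s - θ else θ)
      (volume.restrict (Ioc s 1)) = volume.restrict (Ioc s 1) :=
    (Measure.map_congr hae2).trans Measure.map_id
  rw [hsplit, Measure.map_add _ _ (gmeas s), h1', h2']

instance : IsProbabilityMeasure mu01 := ⟨by simp [mu01, Real.volume_Icc]⟩

lemma copular_f (s : ℝ) (h0 : 0 ≤ s) (h1 : s ≤ 1) : IsCopular (mu01.map (fmap s)) := by
  constructor
  · exact Measure.isProbabilityMeasure_map (fmeas s).aemeasurable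
  · intro k
    rw [Measure.map_map (measurable_pi_apply k) (fmeas s)]
    fin_cases k
    · show Measure.map ((fun u : Fin 2 → ℝ => u 0) ∘ fmap s) mu01 = volume.restrict (Icc 0 1)
      have : ((fun u : Fin 2 → ℝ => u 0) ∘ fmap s) = id := by
        funext θ; simp [fmap]
      rw [this, Measure.map_id]; rfl
    · show Measure.map ((fun u : Fin 2 → ℝ => u 1) ∘ fmap s) mu01 = volume.restrict (Icc 0 1)
      have : ((fun u : Fin 2 → ℝ => u 1) ∘ fmap s)
          = (fun θ : ℝ => if θ ≤ s then s - θ else θ) := by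
        funext θ; simp [fmap]
      rw [this, g_map s h0 h1]; rfl

/-- For `K = 2` and a nonempty decreasing Borel set `E ⊆ [0,1]^2`, the upper copular
probability of `E` equals `min (inf {u 0 + u 1 : u ∈ [0,1]^2 \ E}) 1`
(the infimum over the empty set being `∞`). -/
theorem ucp_decreasing_set (E : Set (Fin 2 → ℝ)) (hE : MeasurableSet E)
    (hne : E.Nonempty) (hsub : E ⊆ Icc (0 : Fin 2 → ℝ) 1)
    (hdec : ∀ u ∈ E, ∀ v ∈ Icc (0 : Fin 2 → ℝ) 1, v ≤ u → v ∈ E) :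
    ucp E = min (⨅ u ∈ Icc (0 : Fin 2 → ℝ) 1 \ E, ENNReal.ofReal (u 0 + u 1)) 1 := by
  set c := ⨅ u ∈ Icc (0 : Fin 2 → ℝ) 1 \ E, ENNReal.ofReal (u 0 + u 1) with hc
  refine le_antisymm ?_ ?_
  · -- upper bound
    apply iSup_le
    rintro ⟨x, hxp, hxm⟩
    refine le_min (le_iInf₂ fun u hu => ?_) ?_
    · have h0u : ∀ i, (0:ℝ) ≤ u i := fun i => hu.1.1 i
      have h1u : ∀ i, u i ≤ 1 := fun i => hu.1.2 i
      have hEsub : E ⊆ (fun v : Fin 2 → ℝ => v 0) ⁻¹' (Iio (u 0)) ∪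
          (fun v : Fin 2 → ℝ => v 1) ⁻¹' (Iio (u 1)) := by
        intro v hv
        by_contra h
        simp only [mem_union, mem_preimage, mem_Iio, not_or, not_lt] at h
        refine hu.2 (hdec v hv u hu.1 fun i => ?_)
        fin_cases i
        · exact h.1
        · exact h.2
      have key : ∀ k : Fin 2, x ((fun v : Fin 2 → ℝ => v k) ⁻¹' (Iio (u k)))
          = ENNReal.ofReal (u k) := by
        intro k
        rw [← Measure.map_apply (measurable_pi_apply k) measurableSet_Iio, hxm k,
          Measure.restrict_apply measurableSet_Iio]
        have : Iio (u k) ∩ Icc (0:ℝ) 1 = Ico 0 (u k) := by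
          ext θ
          simp only [mem_inter_iff, mem_Iio, mem_Icc, mem_Ico]
          constructor
          · rintro ⟨h1, h2, h3⟩; exact ⟨h2, h1⟩
          · rintro ⟨h1, h2⟩; exact ⟨h2, h1, by linarith [h1u k]⟩
        rw [this, Real.volume_Ico, sub_zero]
      calc x E ≤ x ((fun v : Fin 2 → ℝ => v 0) ⁻¹' (Iio (u 0)) ∪
              (fun v : Fin 2 → ℝ => v 1) ⁻¹' (Iio (u 1))) := measure_mono hEsub
        _ ≤ _ + _ := measure_union_le _ _
        _ = ENNReal.ofReal (u 0) + ENNReal.ofReal (u 1) := by rw [key 0, key 1]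
        _ = ENNReal.ofReal (u 0 + u 1) := (ENNReal.ofReal_add (h0u 0) (h0u 1)).symm
    · haveI := hxp
      exact prob_le_one
  · -- lower bound
    by_contra hlow
    obtain ⟨a, ha1, ha2⟩ := exists_between (not_le.mp hlow)
    have ha1' : a < min c 1 := ha2
    have haT : a ≠ ⊤ := (ha1'.trans_le (min_le_right _ _)).ne_top
    set s := a.toReal with hs
    have hs0 : 0 ≤ s := ENNReal.toReal_nonneg
    have hs1 : s ≤ 1 := by
      have := (ha1'.trans_le (min_le_right _ _)).le
      simpa [hs] using ENNReal.toReal_mono (by norm_num) this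
    have hofs : ENNReal.ofReal s = a := ENNReal.ofReal_toReal haT
    have hac : a < c := ha1'.trans_le (min_le_left _ _)
    have hsub2 : Icc (0:ℝ) s ⊆ fmap s ⁻¹' E := by
      intro θ hθ
      have hin : fmap s θ ∈ Icc (0 : Fin 2 → ℝ) 1 := by
        constructor <;> intro i <;> fin_cases i <;>
          simp [fmap, hθ.2] <;> linarith [hθ.1, hθ.2, hs1]
      simp only [mem_preimage]
      by_contra hnot
      have hle : c ≤ ENNReal.ofReal ((fmap s θ) 0 + (fmap s θ) 1) :=
        iInf₂_le (fmap s θ) ⟨hin, hnot⟩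
      have hsum : (fmap s θ) 0 + (fmap s θ) 1 = s := by
        simp [fmap, hθ.2]
      rw [hsum, hofs] at hle
      exact absurd hac (not_lt.mpr hle)
    have hmeasE : (mu01.map (fmap s)) E = mu01 (fmap s ⁻¹' E) :=
      Measure.map_apply (fmeas s) hE
    have hge : ENNReal.ofReal s ≤ (mu01.map (fmap s)) E := by
      rw [hmeasE]
      calc ENNReal.ofReal s = mu01 (Icc 0 s) := by
            rw [mu01, Measure.restrict_apply measurableSet_Icc,
              inter_eq_left.mpr (Icc_subset_Icc le_rfl hs1), Real.volume_Icc, sub_zero]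
        _ ≤ mu01 (fmap s ⁻¹' E) := measure_mono hsub2
    have : a ≤ ucp E := by
      rw [← hofs]
      exact hge.trans (le_iSup (fun x : {x : Measure (Fin 2 → ℝ) // IsCopular x} => x.1 E)
        ⟨_, copular_f s hs0 hs1⟩)
    exact absurd ha1 (not_lt.mpr this)
end

section
/- For K = 2 and α > 0, define M_α(p_1,p_2) := α(p_1 + p_2). Then M_α is a merging function (i.e., M_α(U_1,U_2) is a p-value function for all pairs of uniform [0,1] random variables U_1, U_2 with arbitrary dependence) if and only if α ≥ 1. -/
open MeasureTheory Set

/-- For `K = 2` and `α > 0`, the function `Mα(p₁,p₂) = α(p₁+p₂)` is a merging function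
(i.e. maps arbitrarily dependent uniform random variables to a p-value function)
if and only if `α ≥ 1`. -/
theorem scaled_sum_merging_iff (α : ℝ) (hα : 0 < α) :
    (∀ (Ω : Type) (_ : MeasurableSpace Ω) (P : Measure Ω), IsProbabilityMeasure P →
      ∀ U₁ U₂ : Ω → ℝ, Measurable U₁ → Measurable U₂ →
      Measure.map U₁ P = volume.restrict (Icc (0:ℝ) 1) →
      Measure.map U₂ P = volume.restrict (Icc (0:ℝ) 1) →
      ∀ ε ∈ Icc (0:ℝ) 1, P {ω | α * (U₁ ω + U₂ ω) ≤ ε} ≤ ENNReal.ofReal ε) ↔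
    1 ≤ α := by
  constructor
  · intro h
    by_contra hlt
    rw [not_le] at hlt
    set ε : ℝ := (1 + α) / 2 with hεdef
    have hε0 : (0:ℝ) ≤ ε := by positivity
    have hε1 : ε ≤ 1 := by rw [hεdef]; linarith
    have hεlt1 : ε < 1 := by rw [hεdef]; linarith
    have hαε : α ≤ ε := by rw [hεdef]; linarith
    have hP : IsProbabilityMeasure (volume.restrict (Icc (0:ℝ) 1)) :=
      ⟨by simp⟩
    have hmp : MeasurePreserving (fun t : ℝ => 1 - t) volume volume :=
      Measure.measurePreserving_sub_left volume 1
    have hpre : (fun t : ℝ => 1 - t) ⁻¹' Icc (0:ℝ) 1 = Icc (0:ℝ) 1 := by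
      ext x
      simp only [mem_preimage, mem_Icc]
      constructor <;> intro hx <;> constructor <;> linarith [hx.1, hx.2]
    have hmap2 : Measure.map (fun t : ℝ => 1 - t) (volume.restrict (Icc (0:ℝ) 1)) =
        volume.restrict (Icc (0:ℝ) 1) := by
      have := (hmp.restrict_preimage (measurableSet_Icc : MeasurableSet (Icc (0:ℝ) 1))).map_eq
      rwa [hpre] at this
    have key := h ℝ Real.measurableSpace (volume.restrict (Icc (0:ℝ) 1)) hP
      (fun x => x) (fun x => 1 - x) measurable_id (measurable_const.sub measurable_id)
      (by simp) hmap2 ε ⟨hε0, hε1⟩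
    have hset : {ω : ℝ | α * ((fun x => x) ω + (fun x => 1 - x) ω) ≤ ε} = univ := by
      ext x
      simp only [mem_setOf_eq, mem_univ, iff_true]
      have : x + (1 - x) = 1 := by ring
      rw [this, mul_one]
      exact hαε
    rw [hset] at key
    have h1 : (volume.restrict (Icc (0:ℝ) 1)) univ = 1 := measure_univ
    rw [h1] at key
    have : ENNReal.ofReal ε < 1 := by
      rw [ENNReal.ofReal_lt_one]
      exact hεlt1
    exact absurd key (not_le.mpr this)
  · intro hα1 Ω _ P hP U₁ U₂ hU₁ hU₂ hmap₁ hmap₂ ε hε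
    obtain ⟨hε0, hε1⟩ := hε
    have hneg : P {ω | U₂ ω < 0} = 0 := by
      have : P {ω | U₂ ω < 0} = (Measure.map U₂ P) (Iio 0) := by
        rw [Measure.map_apply hU₂ measurableSet_Iio]; rfl
      rw [this, hmap₂, Measure.restrict_apply measurableSet_Iio]
      convert measure_empty (μ := (volume : Measure ℝ))
      ext x
      simp only [mem_inter_iff, mem_Iio, mem_Icc, mem_empty_iff_false, iff_false, not_and]
      intro hx hx'
      linarith
    have hsub : {ω | α * (U₁ ω + U₂ ω) ≤ ε} ⊆ {ω | U₁ ω ≤ ε} ∪ {ω | U₂ ω < 0} := by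
      intro ω hω
      simp only [mem_setOf_eq] at hω
      by_cases h2 : U₂ ω < 0
      · exact Or.inr h2
      · push_neg at h2
        left
        show U₁ ω ≤ ε
        have hαU : α * U₁ ω ≤ ε := by nlinarith
        rcases le_or_gt (U₁ ω) 0 with h1 | h1
        · linarith
        · nlinarith [mul_nonneg (sub_nonneg.mpr hα1) h1.le]
    have hU1ε : P {ω | U₁ ω ≤ ε} = ENNReal.ofReal ε := by
      have : P {ω | U₁ ω ≤ ε} = (Measure.map U₁ P) (Iic ε) := by
        rw [Measure.map_apply hU₁ measurableSet_Iic]; rfl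
      rw [this, hmap₁, Measure.restrict_apply measurableSet_Iic]
      have : Iic ε ∩ Icc (0:ℝ) 1 = Icc 0 ε := by
        ext x
        simp only [mem_inter_iff, mem_Iic, mem_Icc]
        constructor
        · rintro ⟨h1, h2, h3⟩; exact ⟨h2, h1⟩
        · rintro ⟨h1, h2⟩; exact ⟨h2, h1, h2.trans hε1⟩
      rw [this, Real.volume_Icc, sub_zero]
    calc P {ω | α * (U₁ ω + U₂ ω) ≤ ε}
        ≤ P ({ω | U₁ ω ≤ ε} ∪ {ω | U₂ ω < 0}) := measure_mono hsub
      _ ≤ P {ω | U₁ ω ≤ ε} + P {ω | U₂ ω < 0} := measure_union_le _ _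
      _ = ENNReal.ofReal ε := by rw [hU1ε, hneg, add_zero]
end

section
/- Hommel's bound: let U_1, ..., U_K be uniform [0,1] random variables with arbitrary joint dependence, and let U_(k) denote the k-th order statistic. Then for every ε ∈ [0,1], Prob( (1 + 1/2 + ... + 1/K) · min_{k=1,...,K} (K/k)·U_(k) ≤ ε ) ≤ ε. -/
open MeasureTheory Set
open scoped ENNReal

lemma orderStat_le_card {K : ℕ} (v : Fin K → ℝ) {k : ℕ} (hk1 : 1 ≤ k) (hkK : k ≤ K)
    {t : ℝ} (h : orderStat v k ≤ t) :
    k ≤ (Finset.univ.filter fun i => v i ≤ t).card := by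
  classical
  set l := (List.ofFn v).insertionSort (· ≤ ·) with hl
  have hlen : l.length = K := by
    rw [hl, List.length_insertionSort, List.length_ofFn]
  have hsort : l.Pairwise (· ≤ ·) := List.pairwise_insertionSort _ _
  have hklt : k - 1 < l.length := by omega
  have hOS : orderStat v k = l[k-1] := List.getD_eq_getElem l 0 hklt
  have htake : ∀ x ∈ l.take k, x ≤ t := by
    intro x hx
    obtain ⟨j, hj, hxj⟩ := List.mem_iff_getElem.mp hx
    have hjk : j < k := lt_of_lt_of_le hj (by rw [List.length_take]; exact min_le_left _ _)
    have hjl : j < l.length := by omega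
    have : l[j] ≤ l[k-1] := by
      have := hsort.rel_get_of_le (a := ⟨j, hjl⟩) (b := ⟨k-1, hklt⟩) (by simp; omega)
      simpa using this
    calc x = (l.take k)[j] := hxj.symm
      _ = l[j] := List.getElem_take
      _ ≤ l[k-1] := this
      _ ≤ t := hOS ▸ h
  have hcount : k ≤ l.countP (fun x => decide (x ≤ t)) := by
    have h1 : (l.take k).countP (fun x => decide (x ≤ t)) = (l.take k).length :=
      List.countP_eq_length.mpr (by intro a ha; simpa using htake a ha)
    have h2 : (l.take k).length = k := by simp [List.length_take]; omega
    have h3 := (List.take_sublist k l).countP_le (p := fun x => decide (x ≤ t))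
    omega
  have hperm : l.countP (fun x => decide (x ≤ t))
      = (List.ofFn v).countP (fun x => decide (x ≤ t)) :=
    (List.perm_insertionSort _ _).countP_eq _
  have hofn : (List.ofFn v).countP (fun x => decide (x ≤ t))
      = (Finset.univ.filter (fun i => v i ≤ t)).card := by
    rw [List.ofFn_eq_map, List.countP_map, List.countP_eq_length_filter]
    simp [Finset.filter, Fin.univ_def, Multiset.filter_coe, Function.comp]
    rfl
  omega

set_option maxHeartbeats 1000000 in
/-- Hommel's bound: `H_K · min_k (K/k)·U_(k)` is a valid p-value for arbitrarily
dependent uniform random variables `U_1, ..., U_K`. -/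
theorem hommel_is_pvalue {Ω : Type*} [MeasurableSpace Ω]
    (P : Measure Ω) [IsProbabilityMeasure P]
    {K : ℕ} (hK : 1 ≤ K) (U : Fin K → Ω → ℝ)
    (hmeas : ∀ i, Measurable (U i))
    (hunif : ∀ i, Measure.map (U i) P = volume.restrict (Icc (0:ℝ) 1))
    (ε : ℝ) (hε : ε ∈ Icc (0:ℝ) 1) :
    P {ω | (∑ j ∈ Finset.range K, (1:ℝ) / (j + 1)) *
        (⨅ k : Fin K, ((K:ℝ) / ((k:ℕ) + 1)) * orderStat (fun i => U i ω) ((k:ℕ) + 1))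
        ≤ ε} ≤ ENNReal.ofReal ε := by
  classical
  obtain ⟨hε0, hε1⟩ := hε
  have hKpos : (0:ℝ) < K := by exact_mod_cast hK
  haveI : Nonempty (Fin K) := Fin.pos_iff_nonempty.mp (by omega)
  set H : ℝ := ∑ j ∈ Finset.range K, (1:ℝ) / (j + 1) with hHdef
  have hH1 : (1:ℝ) ≤ H := by
    have := Finset.single_le_sum (f := fun j : ℕ => (1:ℝ) / (j + 1))
      (fun j _ => by positivity) (Finset.mem_range.mpr (by omega : 0 < K))
    rw [hHdef]
    refine le_trans ?_ this
    norm_num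
  have hHpos : (0:ℝ) < H := lt_of_lt_of_le one_pos hH1
  -- thresholds
  set c : ℕ → ℝ := fun n => n * ε / (K * H) with hcdef
  have hc0 : c 0 = 0 := by simp [hcdef]
  have hcmono : Monotone c := by
    intro a b hab
    exact div_le_div_of_nonneg_right
      (mul_le_mul_of_nonneg_right (by exact_mod_cast hab) hε0) (by positivity)
  have hcnonneg : ∀ n, 0 ≤ c n := fun n => by
    have := hcmono (Nat.zero_le n); rw [hc0] at this; exact this
  have hcK : c K ≤ 1 := by
    have h1 : c K = ε / H := by rw [hcdef]; field_simp
    rw [h1]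
    exact le_trans (div_le_self hε0 hH1) hε1
  -- the interval events
  set B : Fin K → ℕ → Set Ω := fun i k => U i ⁻¹' Ioc (c k) (c (k+1)) with hBdef
  have hBmeas : ∀ i k, MeasurableSet (B i k) := fun i k => (hmeas i) measurableSet_Ioc
  -- the weighting function
  set f : Ω → ℝ≥0∞ := fun ω =>
    ∑ i : Fin K, ∑ k ∈ Finset.range K, ((k+1 : ℕ) : ℝ≥0∞)⁻¹ * (B i k).indicator 1 ω
    with hfdef
  have hfmeas : Measurable f := by
    apply Finset.measurable_sum; intro i _
    apply Finset.measurable_sum; intro k _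
    exact (measurable_const.indicator (hBmeas i k)).const_mul _
  -- pointwise bound
  have hpoint : ∀ ω : Ω,
      H * (⨅ k : Fin K, ((K:ℝ) / ((k:ℕ) + 1)) * orderStat (fun i => U i ω) ((k:ℕ) + 1)) ≤ ε →
      (∀ i, 0 < U i ω) → 1 ≤ f ω := by
    intro ω hω hpos
    set v : Fin K → ℝ := fun i => U i ω with hvdef
    set g : Fin K → ℝ := fun k => ((K:ℝ) / ((k:ℕ) + 1)) * orderStat v ((k:ℕ) + 1) with hgdef
    obtain ⟨k0, hk0⟩ := Finite.exists_min g
    have hinf : (⨅ k : Fin K, g k) = g k0 :=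
      le_antisymm (ciInf_le (Finite.bddBelow_range _) k0) (le_ciInf hk0)
    have hω' : H * g k0 ≤ ε := by
      calc H * g k0 = H * ⨅ k : Fin K, g k := by rw [hinf]
        _ ≤ ε := hω
    set m : ℕ := (k0:ℕ) + 1 with hmdef
    have hmpos : (0:ℝ) < m := by positivity
    have hmK : m ≤ K := by omega
    have hO : orderStat v m ≤ c m := by
      rw [hcdef, le_div_iff₀ (by positivity)]
      have hg : g k0 = (K:ℝ) / m * orderStat v m := by rw [hgdef]; simp [hmdef]
      calc orderStat v m * ((K:ℝ) * H) = (H * g k0) * m := by rw [hg]; field_simp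
        _ ≤ ε * m := mul_le_mul_of_nonneg_right hω' (le_of_lt hmpos)
        _ = (m:ℝ) * ε := mul_comm _ _
    set S : Finset (Fin K) := Finset.univ.filter (fun i => v i ≤ c m) with hSdef
    have hcard : m ≤ S.card := orderStat_le_card v (by omega) hmK hO
    -- each i ∈ S contributes at least m⁻¹
    have hinner : ∀ i ∈ S,
        ((m:ℕ) : ℝ≥0∞)⁻¹ ≤ ∑ k ∈ Finset.range K, ((k+1 : ℕ) : ℝ≥0∞)⁻¹ * (B i k).indicator 1 ω := by
      intro i hi
      have hvi : v i ≤ c m := by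
        have := Finset.mem_filter.mp hi; exact this.2
      have hex : ∃ j, v i ≤ c (j+1) := ⟨k0, hvi⟩
      set j : ℕ := Nat.find hex with hjdef
      have hj1 : v i ≤ c (j+1) := Nat.find_spec hex
      have hjk0 : j ≤ (k0:ℕ) := Nat.find_le hvi
      have hjK : j < K := by omega
      have hlow : c j < v i := by
        rcases Nat.eq_zero_or_pos j with h0 | h0
        · rw [h0, hc0]; exact hpos i
        · have := Nat.find_min hex (m := j - 1) (by omega)
          have hrw : j - 1 + 1 = j := by omega
          rw [hrw] at this
          exact lt_of_not_ge this
      have hmem : ω ∈ B i j := ⟨hlow, hj1⟩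
      calc ((m:ℕ) : ℝ≥0∞)⁻¹ ≤ ((j+1 : ℕ) : ℝ≥0∞)⁻¹ * (B i j).indicator 1 ω := by
            rw [Set.indicator_of_mem hmem, Pi.one_apply, mul_one]
            exact ENNReal.inv_le_inv' (by exact_mod_cast (by omega : j + 1 ≤ m))
        _ ≤ ∑ k ∈ Finset.range K, ((k+1 : ℕ) : ℝ≥0∞)⁻¹ * (B i k).indicator 1 ω :=
            Finset.single_le_sum (f := fun k => ((k+1 : ℕ) : ℝ≥0∞)⁻¹ * (B i k).indicator 1 ω)
              (fun _ _ => zero_le) (Finset.mem_range.mpr hjK)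
    have hm0 : ((m:ℕ) : ℝ≥0∞) ≠ 0 := by exact_mod_cast (by omega : m ≠ 0)
    calc (1:ℝ≥0∞) = ((m:ℕ) : ℝ≥0∞) * ((m:ℕ) : ℝ≥0∞)⁻¹ :=
          (ENNReal.mul_inv_cancel hm0 (ENNReal.natCast_ne_top m)).symm
      _ ≤ (S.card : ℝ≥0∞) * ((m:ℕ) : ℝ≥0∞)⁻¹ :=
          mul_le_mul_left (by exact_mod_cast hcard) _
      _ = ∑ _i ∈ S, ((m:ℕ) : ℝ≥0∞)⁻¹ := by rw [Finset.sum_const, nsmul_eq_mul]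
      _ ≤ ∑ i ∈ S, ∑ k ∈ Finset.range K, ((k+1 : ℕ) : ℝ≥0∞)⁻¹ * (B i k).indicator 1 ω :=
          Finset.sum_le_sum hinner
      _ ≤ f ω := Finset.sum_le_sum_of_subset (Finset.subset_univ S)
  -- the null event
  set N : Set Ω := ⋃ i, {ω | U i ω ≤ 0} with hNdef
  have hNnull : P N = 0 := by
    apply measure_iUnion_null; intro i
    have h1 : {ω | U i ω ≤ 0} = U i ⁻¹' (Iic 0) := rfl
    rw [h1, ← Measure.map_apply (hmeas i) measurableSet_Iic, hunif i,
      Measure.restrict_apply measurableSet_Iic]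
    have h2 : Iic (0:ℝ) ∩ Icc 0 1 = {0} := by
      ext x
      simp only [mem_inter_iff, mem_Iic, mem_Icc, mem_singleton_iff]
      constructor
      · rintro ⟨ha, hb, _⟩; linarith
      · rintro rfl; norm_num
    rw [h2]
    exact Real.volume_singleton
  -- measure of each interval event
  have hPB : ∀ i : Fin K, ∀ k, k < K → P (B i k) = ENNReal.ofReal (ε / (K * H)) := by
    intro i k hk
    rw [hBdef]
    rw [← Measure.map_apply (hmeas i) measurableSet_Ioc, hunif i,
      Measure.restrict_apply measurableSet_Ioc]
    have hsub : Ioc (c k) (c (k+1)) ∩ Icc 0 1 = Ioc (c k) (c (k+1)) := by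
      apply inter_eq_left.mpr
      intro x hx
      exact ⟨le_trans (hcnonneg k) (le_of_lt hx.1),
        le_trans hx.2 (le_trans (hcmono (by omega : k + 1 ≤ K)) hcK)⟩
    rw [hsub, Real.volume_Ioc]
    congr 1
    rw [hcdef]
    push_cast
    field_simp
    ring
  -- main chain
  set E : Set Ω := {ω | H *
      (⨅ k : Fin K, ((K:ℝ) / ((k:ℕ) + 1)) * orderStat (fun i => U i ω) ((k:ℕ) + 1)) ≤ ε}
    with hEdef
  have hchain : P E ≤ ∫⁻ ω, f ω ∂P := by
    calc P E ≤ P ((E ∩ Nᶜ) ∪ N) := by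
          apply measure_mono
          intro ω hω
          by_cases hN : ω ∈ N
          · exact Or.inr hN
          · exact Or.inl ⟨hω, hN⟩
      _ ≤ P (E ∩ Nᶜ) + P N := measure_union_le _ _
      _ = P (E ∩ Nᶜ) := by rw [hNnull, add_zero]
      _ ≤ P {ω | 1 ≤ f ω} := by
          apply measure_mono
          rintro ω ⟨hE, hNc⟩
          have hpos : ∀ i, 0 < U i ω := by
            intro i
            by_contra hcon
            exact hNc (mem_iUnion.mpr ⟨i, not_lt.mp hcon⟩)
          exact hpoint ω hE hpos
      _ ≤ ∫⁻ ω, f ω ∂P := by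
          have hml := mul_meas_ge_le_lintegral₀ (μ := P) hfmeas.aemeasurable 1
          rwa [one_mul] at hml
  -- compute the integral
  have hint : ∫⁻ ω, f ω ∂P = ENNReal.ofReal ε := by
    rw [hfdef]
    rw [lintegral_finset_sum _ (fun i _ => by
      apply Finset.measurable_sum; intro k _
      exact (measurable_const.indicator (hBmeas i k)).const_mul _)]
    have hone : ∀ i : Fin K,
        (∫⁻ ω, ∑ k ∈ Finset.range K, ((k+1 : ℕ) : ℝ≥0∞)⁻¹ * (B i k).indicator 1 ω ∂P)
          = ENNReal.ofReal (ε / K) := by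
      intro i
      rw [lintegral_finset_sum (f := fun k ω => ((k+1 : ℕ) : ℝ≥0∞)⁻¹ * (B i k).indicator 1 ω)
        _ (fun k _ => (measurable_const.indicator (hBmeas i k)).const_mul _)]
      have hterm : ∀ k ∈ Finset.range K,
          (∫⁻ ω, ((k+1 : ℕ) : ℝ≥0∞)⁻¹ * (B i k).indicator 1 ω ∂P)
            = ENNReal.ofReal (1 / ((k:ℝ)+1) * (ε / (K * H))) := by
        intro k hk
        rw [lintegral_const_mul _ (show Measurable ((B i k).indicator (1 : Ω → ℝ≥0∞)) from
            measurable_const.indicator (hBmeas i k)),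
          lintegral_indicator_one (hBmeas i k), hPB i k (Finset.mem_range.mp hk)]
        rw [ENNReal.ofReal_mul (by positivity)]
        congr 1
        rw [one_div, ENNReal.ofReal_inv_of_pos (by positivity)]
        congr 1
        rw [show ((k:ℝ)+1) = ((k+1:ℕ):ℝ) by push_cast; ring, ENNReal.ofReal_natCast]
      rw [Finset.sum_congr rfl hterm,
        ← ENNReal.ofReal_sum_of_nonneg (fun k _ => by positivity)]
      congr 1
      rw [← Finset.sum_mul]
      rw [← hHdef]
      field_simp
    rw [Finset.sum_congr rfl (fun i _ => hone i), Finset.sum_const, Finset.card_univ,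
      Fintype.card_fin, nsmul_eq_mul, ← ENNReal.ofReal_natCast,
      ← ENNReal.ofReal_mul (by positivity)]
    congr 1
    field_simp
  calc P E ≤ ∫⁻ ω, f ω ∂P := hchain
    _ = ENNReal.ofReal ε := hint
end
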